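/- arXiv:2510.25710 — 8 statements merged into one kernel-verified Lean document; each statement's English description precedes it below -/
import Mathlib

section
/- Let G be a finite simple graph, A ⊆ V(G), r ≥ 1 an integer, and x a vertex of Σ_r(A,G). Then x is a shedding vertex of Σ_r(A,G) if and only if for every F ∈ Supp_r(A,G) with x ∉ F there exists a vertex y ∈ F such that (F \ {y}) ∪ {x} ∈ Supp_r(A,G). -/
open Finset

variable {V : Type*} [Fintype V] [DecidableEq V]

/-- The induced subgraph of `G` on the finset `s` is connected. -/
def ConnOn (G : SimpleGraph V) (s : Finset V) : Prop :=
  (G.induce (s : Set V)).Connected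

/-- `Supp_r(A, G)` relative to the ground (vertex) set `U`:
all `F ⊆ U` with `|F| = r`, `F ∩ A = ∅` and `G[F ∪ A]` connected. -/
def Supp (G : SimpleGraph V) (U A : Finset V) (r : ℕ) : Set (Finset V) :=
  {F | F ⊆ U ∧ F.card = r ∧ F ∩ A = ∅ ∧ ConnOn G (F ∪ A)}

/-- The `r`-co-connected complex `Σ_r(A, G)` on ground set `U`: faces are all subsets of
sets of the form `(U \ F) \ A` with `F ∈ Supp_r(A, G)`. -/
def SigmaC (G : SimpleGraph V) (U A : Finset V) (r : ℕ) : Set (Finset V) :=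
  {H | ∃ F ∈ Supp G U A r, H ⊆ (U \ F) \ A}

/-- The circuit set of the `r`-connected clutter `Con_r(G)` on ground set `U`. -/
def ConR (G : SimpleGraph V) (U : Finset V) (r : ℕ) : Set (Finset V) :=
  {W | W ⊆ U ∧ W.card = r ∧ ConnOn G W}

/-- `Σ_r(G)`: faces are all subsets of sets of the form `U \ W`, `W ∈ Con_r(G)`. -/
def SigmaG (G : SimpleGraph V) (U : Finset V) (r : ℕ) : Set (Finset V) :=
  {H | ∃ W ∈ ConR G U r, H ⊆ U \ W}

/-- Deletion of a vertex in a simplicial complex. -/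
def delC (Δ : Set (Finset V)) (x : V) : Set (Finset V) :=
  {H | H ∈ Δ ∧ x ∉ H}

/-- Link of a vertex in a simplicial complex. -/
def linkC (Δ : Set (Finset V)) (x : V) : Set (Finset V) :=
  {H | H ∈ Δ ∧ x ∉ H ∧ insert x H ∈ Δ}

/-- A facet is a maximal face. -/
def IsFacet (Δ : Set (Finset V)) (F : Finset V) : Prop :=
  F ∈ Δ ∧ ∀ H ∈ Δ, F ⊆ H → F = H

/-- `x` is a shedding vertex: every facet of `del_Δ(x)` is a facet of `Δ`. -/
def IsShedding (Δ : Set (Finset V)) (x : V) : Prop :=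
  ∀ F, IsFacet (delC Δ x) F → IsFacet Δ F

/-- Vertex decomposability of a simplicial complex (the void complex, the empty complex and
simplices are vertex decomposable; otherwise one needs a shedding vertex whose link and
deletion are vertex decomposable). -/
inductive VD {V : Type*} [DecidableEq V] : Set (Finset V) → Prop
  | simplex (s : Finset V) : VD {t | t ⊆ s}
  | void : VD (∅ : Set (Finset V))
  | step (Δ : Set (Finset V)) (x : V) (hx : {x} ∈ Δ) (hshed : IsShedding Δ x)
      (hlink : VD (linkC Δ x)) (hdel : VD (delC Δ x)) : VD Δ

/-- `x` is a shedding vertex of `Σ_r(A,G)` iff for every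
`F ∈ Supp_r(A,G)` with `x ∉ F` there is `y ∈ F` with `(F \ {y}) ∪ {x} ∈ Supp_r(A,G)`. -/
theorem shedding_iff_supp {V : Type*} [Fintype V] [DecidableEq V]
    (G : SimpleGraph V) (A : Finset V) (r : ℕ) (hr : 1 ≤ r) (x : V)
    (hx : {x} ∈ SigmaC G Finset.univ A r) :
    IsShedding (SigmaC G Finset.univ A r) x ↔
      ∀ F ∈ Supp G Finset.univ A r, x ∉ F →
        ∃ y ∈ F, insert x (F.erase y) ∈ Supp G Finset.univ A r := by
  classical
  obtain ⟨F₀, hF₀, hxsub⟩ := hx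
  have hxA : x ∉ A := by
    have h := hxsub (Finset.mem_singleton_self x)
    simp [Finset.mem_sdiff] at h
    exact h.2
  have hcard : ∀ F ∈ Supp G Finset.univ A r,
      ((Finset.univ \ F) \ A).card = Fintype.card V - (r + A.card) := by
    intro F hF
    obtain ⟨-, hc, hd, -⟩ := hF
    have hun : (Finset.univ \ F) \ A = Finset.univ \ (F ∪ A) := by
      ext z
      simp only [Finset.mem_sdiff, Finset.mem_union, Finset.mem_univ, true_and, not_or]
    rw [hun, Finset.card_sdiff_of_subset (Finset.subset_univ _), Finset.card_univ,
      Finset.card_union_of_disjoint (Finset.disjoint_iff_inter_eq_empty.mpr hd), hc]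
  constructor
  · intro hshed F hF hxF
    have hxC : x ∈ (Finset.univ \ F) \ A := by simp [hxF, hxA]
    have hHdel : ((Finset.univ \ F) \ A).erase x ∈ delC (SigmaC G Finset.univ A r) x :=
      ⟨⟨F, hF, Finset.erase_subset _ _⟩, Finset.notMem_erase _ _⟩
    have hnotfacet : ¬ IsFacet (delC (SigmaC G Finset.univ A r) x)
        (((Finset.univ \ F) \ A).erase x) := by
      intro hfac
      have hfac2 := hshed _ hfac
      have heq := hfac2.2 ((Finset.univ \ F) \ A) ⟨F, hF, subset_rfl⟩ (Finset.erase_subset _ _)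
      rw [← heq] at hxC
      exact Finset.notMem_erase _ _ hxC
    obtain ⟨H', hH'del, hsub, hne⟩ : ∃ H', H' ∈ delC (SigmaC G Finset.univ A r) x ∧
        ((Finset.univ \ F) \ A).erase x ⊆ H' ∧ ((Finset.univ \ F) \ A).erase x ≠ H' := by
      by_contra hcon
      push_neg at hcon
      exact hnotfacet ⟨hHdel, hcon⟩
    obtain ⟨⟨F'', hF'', hsubC''⟩, hxH'⟩ := hH'del
    have hcc : ((Finset.univ \ F) \ A).card = ((Finset.univ \ F'') \ A).card := by
      rw [hcard F hF, hcard F'' hF'']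
    have hH'eq : H' = (Finset.univ \ F'') \ A := by
      apply Finset.eq_of_subset_of_card_le hsubC''
      have h1 : ((Finset.univ \ F) \ A).erase x ⊂ H' := hsub.ssubset_of_ne hne
      have h2 := Finset.card_lt_card h1
      have h3 := Finset.card_erase_of_mem hxC
      have h4 : 0 < ((Finset.univ \ F) \ A).card := Finset.card_pos.mpr ⟨x, hxC⟩
      omega
    have hxF'' : x ∈ F'' := by
      rw [hH'eq] at hxH'
      by_contra h
      exact hxH' (by simp [Finset.mem_sdiff, h, hxA])
    have hsubF : F'' ⊆ insert x F := by
      intro z hz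
      by_contra hzn
      simp only [Finset.mem_insert, not_or] at hzn
      have hzA : z ∉ A := by
        intro hzA2
        have := hF''.2.2.1
        have : z ∈ F'' ∩ A := Finset.mem_inter.mpr ⟨hz, hzA2⟩
        rw [hF''.2.2.1] at this
        exact absurd this (Finset.notMem_empty z)
      have hzC : z ∈ ((Finset.univ \ F) \ A).erase x := by
        simp [Finset.mem_erase, Finset.mem_sdiff, hzn.1, hzn.2, hzA]
      have hz2 := hsub hzC
      rw [hH'eq] at hz2
      simp [Finset.mem_sdiff] at hz2
      exact hz2.1 hz
    have hxe : F''.erase x ⊆ F := by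
      intro z hz
      rcases Finset.mem_erase.mp hz with ⟨hzx, hzF''⟩
      rcases Finset.mem_insert.mp (hsubF hzF'') with h | h
      · exact absurd h hzx
      · exact h
    have hcards : (F''.erase x).card = r - 1 := by
      rw [Finset.card_erase_of_mem hxF'', hF''.2.1]
    have hlt : (F''.erase x).card < F.card := by
      rw [hcards, hF.2.1]; omega
    obtain ⟨y, hyF, hyn⟩ := Finset.exists_of_ssubset
      (hxe.ssubset_of_ne (fun h => by rw [h] at hlt; exact lt_irrefl _ hlt))
    refine ⟨y, hyF, ?_⟩
    have hsub2 : F''.erase x ⊆ F.erase y := fun z hz =>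
      Finset.mem_erase.mpr ⟨fun h => hyn (h ▸ hz), hxe hz⟩
    have hceq : (F.erase y).card ≤ (F''.erase x).card := by
      rw [Finset.card_erase_of_mem hyF, hF.2.1, hcards]
    have key : F.erase y = F''.erase x :=
      (Finset.eq_of_subset_of_card_le hsub2 hceq).symm
    rw [key, Finset.insert_erase hxF'']
    exact hF''
  · intro hcond H hHfac
    obtain ⟨⟨F, hF, hsubC⟩, hxH⟩ := hHfac.1
    by_cases hxF : x ∈ F
    · have hxC : x ∉ (Finset.univ \ F) \ A := by simp [hxF]
      have hCdel : (Finset.univ \ F) \ A ∈ delC (SigmaC G Finset.univ A r) x :=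
        ⟨⟨F, hF, subset_rfl⟩, hxC⟩
      have hHC : H = (Finset.univ \ F) \ A := hHfac.2 _ hCdel hsubC
      rw [hHC]
      refine ⟨⟨F, hF, subset_rfl⟩, ?_⟩
      intro H'' hH'' hsub''
      obtain ⟨F₂, hF₂, hsub₂⟩ := hH''
      have hss : (Finset.univ \ F) \ A ⊆ (Finset.univ \ F₂) \ A := hsub''.trans hsub₂
      have heq : (Finset.univ \ F) \ A = (Finset.univ \ F₂) \ A :=
        Finset.eq_of_subset_of_card_le hss (by rw [hcard F hF, hcard F₂ hF₂])
      exact subset_antisymm hsub'' (heq ▸ hsub₂)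
    · have hxC : x ∈ (Finset.univ \ F) \ A := by simp [hxF, hxA]
      have hHsub : H ⊆ ((Finset.univ \ F) \ A).erase x := fun z hz =>
        Finset.mem_erase.mpr ⟨fun h => hxH (h ▸ hz), hsubC hz⟩
      have hEdel : ((Finset.univ \ F) \ A).erase x ∈ delC (SigmaC G Finset.univ A r) x :=
        ⟨⟨F, hF, Finset.erase_subset _ _⟩, Finset.notMem_erase _ _⟩
      have hHE : H = ((Finset.univ \ F) \ A).erase x := hHfac.2 _ hEdel hHsub
      obtain ⟨y, hyF, hF'⟩ := hcond F hF hxF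
      have hxF' : x ∈ insert x (F.erase y) := Finset.mem_insert_self _ _
      have hC'del : (Finset.univ \ insert x (F.erase y)) \ A ∈
          delC (SigmaC G Finset.univ A r) x :=
        ⟨⟨_, hF', subset_rfl⟩, by simp [hxF']⟩
      have hsubC' : ((Finset.univ \ F) \ A).erase x ⊆
          (Finset.univ \ insert x (F.erase y)) \ A := by
        intro z hz
        rcases Finset.mem_erase.mp hz with ⟨hzx, hz2⟩
        simp only [Finset.mem_sdiff, Finset.mem_univ, true_and] at hz2 ⊢
        refine ⟨?_, hz2.2⟩
        intro hzF'
        rcases Finset.mem_insert.mp hzF' with h | h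
        · exact hzx h
        · exact hz2.1 (Finset.mem_of_mem_erase h)
      have hfin := hHfac.2 _ hC'del (hHE ▸ hsubC')
      rw [hHE] at hfin
      have hc1 : (((Finset.univ \ F) \ A).erase x).card = ((Finset.univ \ F) \ A).card - 1 :=
        Finset.card_erase_of_mem hxC
      have hc2 : ((Finset.univ \ insert x (F.erase y)) \ A).card =
          ((Finset.univ \ F) \ A).card := by rw [hcard _ hF', hcard _ hF]
      have hpos : 0 < ((Finset.univ \ F) \ A).card := Finset.card_pos.mpr ⟨x, hxC⟩
      rw [hfin] at hc1
      omega
end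

section
/- Let G be a finite simple graph, A ⊆ V(G), r ≥ 1 an integer, and x a vertex of Σ_r(A,G). Then the link of x in Σ_r(A,G) equals Σ_r(A, G \ x), i.e., lk_{Σ_r(A,G)}(x) is the simplicial complex generated by the sets (V(G \ x) \ F) \ A with F ∈ Supp_r(A, G \ x), where G \ x is the induced subgraph of G on V(G) \ {x}. -/
open Finset

variable {V : Type*} [Fintype V] [DecidableEq V]

/-- The link of a vertex `x` of `Σ_r(A,G)` is `Σ_r(A, G \ x)`,
the `r`-co-connected complex of the induced subgraph on `V(G) \ {x}`. -/
theorem link_sigma_eq {V : Type*} [Fintype V] [DecidableEq V]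
    (G : SimpleGraph V) (A : Finset V) (r : ℕ) (hr : 1 ≤ r) (x : V)
    (hx : {x} ∈ SigmaC G Finset.univ A r) :
    linkC (SigmaC G Finset.univ A r) x = SigmaC G (Finset.univ \ {x}) A r := by
  have hxA : x ∉ A := by
    obtain ⟨F₀, _, hsub⟩ := hx
    have := hsub (Finset.mem_singleton_self x)
    simp only [Finset.mem_sdiff] at this
    exact this.2
  ext H
  constructor
  · rintro ⟨⟨F, hF, hH⟩, hxH, F', ⟨hF'U, hcard, hdisj, hconn⟩, hH'⟩
    have hxF' : x ∉ F' := by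
      have := hH' (Finset.mem_insert_self x H)
      simp only [Finset.mem_sdiff] at this
      exact this.1.2
    refine ⟨F', ⟨fun y hy => ?_, hcard, hdisj, hconn⟩, fun y hy => ?_⟩
    · simp only [Finset.mem_sdiff, Finset.mem_univ, Finset.mem_singleton, true_and]
      rintro rfl; exact hxF' hy
    · have := hH' (Finset.mem_insert_of_mem hy)
      simp only [Finset.mem_sdiff, Finset.mem_univ, Finset.mem_singleton, true_and] at this ⊢
      exact ⟨⟨fun h => hxH (h ▸ hy), this.1⟩, this.2⟩
  · rintro ⟨F, ⟨hFU, hcard, hdisj, hconn⟩, hH⟩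
    have hxF : x ∉ F := fun h => by
      have := hFU h
      simp at this
    have hmem : H ⊆ (Finset.univ \ F) \ A := fun y hy => by
      have := hH hy
      simp only [Finset.mem_sdiff, Finset.mem_univ, Finset.mem_singleton, true_and] at this ⊢
      exact ⟨this.1.2, this.2⟩
    have hxH : x ∉ H := fun h => by
      have := hH h
      simp at this
    refine ⟨⟨F, ⟨Finset.subset_univ F, hcard, hdisj, hconn⟩, hmem⟩, hxH,
      F, ⟨Finset.subset_univ F, hcard, hdisj, hconn⟩, fun y hy => ?_⟩
    rcases Finset.mem_insert.mp hy with rfl | hy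
    · simp [hxF, hxA]
    · exact hmem hy
end

section
/- Let G be a finite simple graph, A ⊆ V(G), r ≥ 2 an integer, and x a vertex of Σ_r(A,G) that is a shedding vertex of Σ_r(A,G). Then the deletion of x in Σ_r(A,G) equals Σ_{r−1}(A ∪ {x}, G), i.e., del_{Σ_r(A,G)}(x) is the simplicial complex generated by the sets (V(G) \ F) \ (A ∪ {x}) with F ∈ Supp_{r−1}(A ∪ {x}, G). -/
open Finset

variable {V : Type*} [Fintype V] [DecidableEq V]

/-- For `r ≥ 2` and a shedding vertex `x` of `Σ_r(A,G)`,
the deletion of `x` in `Σ_r(A,G)` equals `Σ_{r-1}(A ∪ {x}, G)`. -/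
theorem del_sigma_eq {V : Type*} [Fintype V] [DecidableEq V]
    (G : SimpleGraph V) (A : Finset V) (r : ℕ) (hr : 2 ≤ r) (x : V)
    (hx : {x} ∈ SigmaC G Finset.univ A r)
    (hshed : IsShedding (SigmaC G Finset.univ A r) x) :
    delC (SigmaC G Finset.univ A r) x = SigmaC G Finset.univ (insert x A) (r - 1) := by
  have hxA : x ∉ A := by
    obtain ⟨F0, _, hx0⟩ := hx
    have := hx0 (Finset.mem_singleton_self x)
    simp only [Finset.mem_sdiff] at this
    exact this.2
  ext H
  constructor
  · rintro ⟨hHΔ, hxH⟩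
    -- find a maximal face of delC containing H
    set Δ := SigmaC G Finset.univ A r with hΔ
    set S : Set (Finset V) := {K | K ∈ delC Δ x ∧ H ⊆ K} with hS
    have hSfin : S.Finite := Set.toFinite S
    have hSne : S.Nonempty := ⟨H, ⟨hHΔ, hxH⟩, subset_rfl⟩
    obtain ⟨K, hKS, hKmax⟩ := hSfin.exists_maximalFor id S hSne
    have hKfacet : IsFacet (delC Δ x) K := by
      refine ⟨hKS.1, fun H' hH' hKH' => hKH'.antisymm (hKmax ⟨hH', hKS.2.trans hKH'⟩ hKH')⟩
    obtain ⟨hKΔ, hKmaxΔ⟩ := hshed K hKfacet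
    obtain ⟨F, hF, hKsub⟩ := hKΔ
    have hfull : K = (Finset.univ \ F) \ A :=
      hKmaxΔ _ ⟨F, hF, subset_rfl⟩ hKsub
    have hxK : x ∉ K := hKS.1.2
    have hxF : x ∈ F := by
      by_contra hxF
      exact hxK (hfull ▸ by simp [Finset.mem_sdiff, hxF, hxA])
    obtain ⟨_, hcard, hdisj, hconn⟩ := hF
    refine ⟨F.erase x, ⟨Finset.subset_univ _, ?_, ?_, ?_⟩, ?_⟩
    · rw [Finset.card_erase_of_mem hxF, hcard]
    · apply Finset.eq_empty_iff_forall_notMem.2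
      intro y hy
      simp only [Finset.mem_inter, Finset.mem_erase, Finset.mem_insert] at hy
      rcases hy.2 with h | h
      · exact hy.1.1 h
      · exact Finset.eq_empty_iff_forall_notMem.1 hdisj y
          (Finset.mem_inter.2 ⟨hy.1.2, h⟩)
    · have : F.erase x ∪ insert x A = F ∪ A := by
        ext y
        simp only [Finset.mem_union, Finset.mem_erase, Finset.mem_insert]
        constructor
        · rintro (⟨_, h⟩ | (rfl | h))
          exacts [Or.inl h, Or.inl hxF, Or.inr h]
        · rintro (h | h)
          · by_cases hyx : y = x
            · exact Or.inr (Or.inl hyx)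
            · exact Or.inl ⟨hyx, h⟩
          · exact Or.inr (Or.inr h)
      rw [this]; exact hconn
    · have : (Finset.univ \ F.erase x) \ insert x A = (Finset.univ \ F) \ A := by
        ext y
        simp only [Finset.mem_sdiff, Finset.mem_univ, true_and, Finset.mem_erase,
          Finset.mem_insert, not_and, not_or]
        constructor
        · rintro ⟨h1, h2, h3⟩
          exact ⟨h1 h2, h3⟩
        · rintro ⟨h1, h2⟩
          exact ⟨fun _ => h1, fun h => h1 (h ▸ hxF), h2⟩
      rw [this, ← hfull]
      exact hKS.2
  · rintro ⟨F', ⟨_, hcard, hdisj, hconn⟩, hsub⟩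
    have hxF' : x ∉ F' := fun h =>
      Finset.eq_empty_iff_forall_notMem.1 hdisj x
        (Finset.mem_inter.2 ⟨h, Finset.mem_insert_self x A⟩)
    refine ⟨⟨insert x F', ⟨Finset.subset_univ _, ?_, ?_, ?_⟩, ?_⟩, fun h => ?_⟩
    · rw [Finset.card_insert_of_notMem hxF', hcard]
      omega
    · apply Finset.eq_empty_iff_forall_notMem.2
      intro y hy
      simp only [Finset.mem_inter, Finset.mem_insert] at hy
      rcases hy.1 with rfl | h
      · exact hxA hy.2
      · exact Finset.eq_empty_iff_forall_notMem.1 hdisj y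
          (Finset.mem_inter.2 ⟨h, Finset.mem_insert_of_mem hy.2⟩)
    · have : insert x F' ∪ A = F' ∪ insert x A := by
        ext y
        simp only [Finset.mem_union, Finset.mem_insert]
        tauto
      rw [this]; exact hconn
    · intro y hy
      have := hsub hy
      simp only [Finset.mem_sdiff, Finset.mem_univ, true_and, Finset.mem_insert,
        not_or] at this ⊢
      tauto
    · exact (Finset.mem_sdiff.1 (hsub h)).2 (Finset.mem_insert_self x A)
end

section
/- Let G be a finite simple graph, A ⊆ V(G) a nonempty subset, and x a vertex of Σ_1(A,G) that is a shedding vertex of Σ_1(A,G). Then x ∈ N_G(A), the induced subgraph G[A ∪ {x}] is connected, and del_{Σ_1(A,G)}(x) is the full simplex on the vertex set V(G) \ (A ∪ {x}). -/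
open Finset

variable {V : Type*} [Fintype V] [DecidableEq V]

lemma conn_adj_of_connOn {V : Type*} [Fintype V] [DecidableEq V] (G : SimpleGraph V)
    (A : Finset V) (hA : A.Nonempty) (x : V) (hxA : x ∉ A)
    (h : ConnOn G ({x} ∪ A)) : ∃ a ∈ A, G.Adj x a := by
  obtain ⟨a, ha⟩ := hA
  have hxs : x ∈ (({x} ∪ A : Finset V) : Set V) := by simp
  have has : a ∈ (({x} ∪ A : Finset V) : Set V) := by simp [ha]
  have h' : (G.induce (({x} ∪ A : Finset V) : Set V)).Connected := h
  obtain ⟨p⟩ := h'.preconnected ⟨x, hxs⟩ ⟨a, has⟩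
  have hne : (⟨x, hxs⟩ : (({x} ∪ A : Finset V) : Set V)) ≠ ⟨a, has⟩ := by
    intro he
    apply hxA
    have : x = a := congrArg Subtype.val he
    exact this ▸ ha
  cases p with
  | nil => exact absurd rfl hne
  | @cons _ b _ hadj q =>
    have hadj' : G.Adj x (b : V) := hadj
    have hmem : (b : V) ∈ ({x} ∪ A : Finset V) := b.2
    rcases Finset.mem_union.mp hmem with h1 | h1
    · exact absurd (Finset.mem_singleton.mp h1) (G.ne_of_adj hadj').symm
    · exact ⟨_, h1, hadj'⟩

/-- For `A ≠ ∅` and a shedding vertex `x` of `Σ_1(A,G)`: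
`x ∈ N_G(A)`, `G[A ∪ {x}]` is connected, and `del(x)` is the full simplex on
`V(G) \ (A ∪ {x})`. -/
theorem del_sigma_one {V : Type*} [Fintype V] [DecidableEq V]
    (G : SimpleGraph V) (A : Finset V) (hA : A.Nonempty) (x : V)
    (hx : {x} ∈ SigmaC G Finset.univ A 1)
    (hshed : IsShedding (SigmaC G Finset.univ A 1) x) :
    (x ∉ A ∧ ∃ a ∈ A, G.Adj x a) ∧
      ConnOn G (insert x A) ∧
      delC (SigmaC G Finset.univ A 1) x = {H | H ⊆ Finset.univ \ insert x A} := by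
  
  classical
  obtain ⟨F, ⟨hFU, hFcard, hFA, hFconn⟩, hxsub⟩ := hx
  obtain ⟨y, rfl⟩ := Finset.card_eq_one.mp hFcard
  have hxmem := hxsub (Finset.mem_singleton_self x)
  rw [Finset.mem_sdiff, Finset.mem_sdiff] at hxmem
  obtain ⟨⟨-, hxy⟩, hxA⟩ := hxmem
  have hxney : x ≠ y := fun h => hxy (by simp [h])
  have hyA : y ∉ A := by
    intro h
    exact (Finset.eq_empty_iff_forall_notMem.mp hFA y) (by simp [h])
  have hxconn : ConnOn G ({x} ∪ A) := by
    by_contra hc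
    set Fct : Finset V := (Finset.univ \ A) \ {x, y} with hFctdef
    have hFctSig : Fct ∈ SigmaC G Finset.univ A 1 := by
      refine ⟨{y}, ⟨Finset.subset_univ _, Finset.card_singleton y, hFA, hFconn⟩, ?_⟩
      intro w hw
      simp only [hFctdef, Finset.mem_sdiff, Finset.mem_univ, true_and,
        Finset.mem_insert, Finset.mem_singleton, not_or] at hw ⊢
      tauto
    have hxFct : x ∉ Fct := by simp [hFctdef]
    have hfacet : IsFacet (delC (SigmaC G Finset.univ A 1) x) Fct := by
      refine ⟨⟨hFctSig, hxFct⟩, ?_⟩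
      rintro H ⟨⟨F', ⟨hF'U, hF'card, hF'A, hF'conn⟩, hHsub⟩, hxH⟩ hsubH
      obtain ⟨z, rfl⟩ := Finset.card_eq_one.mp hF'card
      have hzA : z ∉ A := by
        intro h
        exact (Finset.eq_empty_iff_forall_notMem.mp hF'A z) (by simp [h])
      have hzx : z ≠ x := by
        rintro rfl
        exact hc hF'conn
      have hzH : z ∉ H := by
        intro h
        have := hHsub h
        simp at this
      have hzFct : z ∉ Fct := fun h => hzH (hsubH h)
      have hzy : z = y := by
        by_contra hne
        exact hzFct (by simp [hFctdef, hzA, hzx, hne])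
      subst hzy
      apply Finset.Subset.antisymm hsubH
      intro w hw
      have h1 := hHsub hw
      simp only [Finset.mem_sdiff, Finset.mem_univ, true_and,
        Finset.mem_singleton] at h1
      simp only [hFctdef, Finset.mem_sdiff, Finset.mem_univ, true_and,
        Finset.mem_insert, Finset.mem_singleton, not_or]
      exact ⟨h1.2, fun h => hxH (h ▸ hw), h1.1⟩
    have hbigSig : (Finset.univ \ {y}) \ A ∈ SigmaC G Finset.univ A 1 :=
      ⟨{y}, ⟨Finset.subset_univ _, Finset.card_singleton y, hFA, hFconn⟩, subset_rfl⟩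
    have hsub2 : Fct ⊆ (Finset.univ \ {y}) \ A := by
      intro w hw
      simp only [hFctdef, Finset.mem_sdiff, Finset.mem_univ, true_and,
        Finset.mem_insert, Finset.mem_singleton, not_or] at hw ⊢
      tauto
    have heq := (hshed Fct hfacet).2 _ hbigSig hsub2
    have hxbig : x ∈ (Finset.univ \ {y}) \ A := by simp [hxney, hxA]
    rw [← heq] at hxbig
    exact hxFct hxbig
  have hxconn' : ConnOn G (insert x A) := by
    rwa [Finset.insert_eq]
  refine ⟨⟨hxA, conn_adj_of_connOn G A hA x hxA hxconn⟩, hxconn', ?_⟩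
  ext H
  simp only [delC, SigmaC, Supp, Set.mem_setOf_eq]
  constructor
  · rintro ⟨⟨F', hF', hHsub⟩, hxH⟩
    intro w hw
    have h1 := hHsub hw
    simp only [Finset.mem_sdiff, Finset.mem_univ, true_and] at h1
    simp only [Finset.mem_sdiff, Finset.mem_univ, true_and, Finset.mem_insert, not_or]
    exact ⟨fun h => hxH (h ▸ hw), h1.2⟩
  · intro hH
    have hxH : x ∉ H := by
      intro h
      have := hH h
      simp at this
    refine ⟨⟨{x}, ⟨Finset.subset_univ _, Finset.card_singleton x,
      Finset.singleton_inter_of_notMem hxA, hxconn⟩, ?_⟩, hxH⟩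
    intro w hw
    have := hH hw
    simp only [Finset.mem_sdiff, Finset.mem_univ, true_and, Finset.mem_insert,
      not_or] at this ⊢
    simp only [Finset.mem_singleton]
    exact ⟨this.1, this.2⟩
end

section
/- Let G be a finite simple graph and let A ⊆ V(G) be a nonempty subset such that the induced subgraph G[A] is connected. Then for every integer r ≥ 1 the simplicial complex Σ_r(A,G) is vertex decomposable. -/
open Finset

variable {V : Type*} [Fintype V] [DecidableEq V]

set_option linter.unusedSectionVars false

lemma exists_cross {G : SimpleGraph V} (S : Finset V) {u v : V} (p : G.Walk u v)
    (hu : u ∉ S) (hv : v ∈ S) :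
    ∃ a b, G.Adj a b ∧ a ∈ p.support ∧ b ∈ p.support ∧ a ∉ S ∧ b ∈ S := by
  induction p with
  | nil => exact absurd hv hu
  | @cons u w v h q ih =>
    by_cases hw : w ∈ S
    · exact ⟨u, w, h, by simp, by simp, hu, hw⟩
    · obtain ⟨a, b, hab, ha, hb, haS, hbS⟩ := ih hw hv
      exact ⟨a, b, hab, by simp [ha], by simp [hb], haS, hbS⟩

lemma conn_insert_of_adj {G : SimpleGraph V} {S : Finset V} {u w : V}
    (hS : ConnOn G S) (hw : w ∈ S) (huw : G.Adj u w) : ConnOn G (insert u S) := by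
  have h1 : (G.induce (({u, w} : Set V) ∪ ↑S)).Connected :=
    SimpleGraph.induce_union_connected (SimpleGraph.induce_pair_connected_of_adj huw).preconnected
      (SimpleGraph.Connected.preconnected hS)
      ⟨w, by simp, hw⟩
  have h2 : (({u, w} : Set V) ∪ ↑S) = ↑(insert u S) := by
    ext y; simp only [Set.mem_union, Set.mem_insert_iff, Set.mem_singleton_iff,
      Finset.coe_insert, Finset.mem_coe, Finset.mem_insert]
    constructor
    · rintro ((h | h) | h)
      · exact Or.inl h
      · exact Or.inr (h ▸ hw)
      · exact Or.inr h
    · rintro (h | h)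
      · exact Or.inl (Or.inl h)
      · exact Or.inr h
  rw [ConnOn]; rw [← h2]; exact h1

lemma conn_step {G : SimpleGraph V} {S T : Finset V} (hS : ConnOn G S) (hT : ConnOn G T)
    (hST : S ⊆ T) (hSne : S.Nonempty) (hlt : S.card < T.card) :
    ∃ u ∈ T, u ∉ S ∧ ConnOn G (insert u S) := by
  obtain ⟨a, ha⟩ := hSne
  have hTS : (T \ S).Nonempty := by
    rw [← Finset.card_pos, Finset.card_sdiff_of_subset hST]; omega
  obtain ⟨b, hb⟩ := hTS
  rw [Finset.mem_sdiff] at hb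
  have hTc : ((⊤ : G.Subgraph).induce ↑T).Connected := by
    rw [← SimpleGraph.connected_induce_iff]; exact hT
  rw [SimpleGraph.Subgraph.connected_iff_forall_exists_walk_subgraph] at hTc
  obtain ⟨p, hp⟩ := hTc.2 (u := b) (v := a) (by simpa using hb.1) (by simpa using hST ha)
  have hsupp : ∀ y ∈ p.support, y ∈ T := by
    intro y hy
    have := hp.1 (by rw [SimpleGraph.Walk.verts_toSubgraph]; exact hy)
    simpa using this
  obtain ⟨c, d, hcd, hc, hd, hcS, hdS⟩ := exists_cross S p hb.2 ha
  exact ⟨c, hsupp c hc, hcS, conn_insert_of_adj hS hdS hcd⟩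

lemma conn_union {G : SimpleGraph V} {S T : Finset V} (hS : ConnOn G S) (hT : ConnOn G T)
    (hne : (S ∩ T).Nonempty) : ConnOn G (S ∪ T) := by
  rw [ConnOn, Finset.coe_union]
  refine SimpleGraph.induce_union_connected (SimpleGraph.Connected.preconnected hS)
    (SimpleGraph.Connected.preconnected hT) ?_
  obtain ⟨a, ha⟩ := hne
  rw [Finset.mem_inter] at ha
  exact ⟨a, ha.1, ha.2⟩

lemma conn_grow {G : SimpleGraph V} {T : Finset V} (hT : ConnOn G T) :
    ∀ m, m ≤ T.card → ∀ S : Finset V, S ⊆ T → S.Nonempty → ConnOn G S → S.card ≤ m →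
      ∃ S', S ⊆ S' ∧ S' ⊆ T ∧ S'.card = m ∧ ConnOn G S' := by
  intro m
  induction m with
  | zero =>
    intro _ S _ hne _ hc
    exact absurd (Finset.card_pos.mpr hne) (by omega)
  | succ m ih =>
    intro hm S hST hne hS hc
    rcases Nat.lt_or_ge S.card (m+1) with h | h
    · obtain ⟨S', h1, h2, h3, h4⟩ := ih (by omega) S hST hne hS (by omega)
      obtain ⟨u, huT, huS, hconn⟩ := conn_step h4 hT h2 (hne.mono h1) (by omega)
      exact ⟨insert u S', h1.trans (Finset.subset_insert _ _),
        Finset.insert_subset huT h2, by rw [Finset.card_insert_of_notMem huS, h3], hconn⟩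
    · exact ⟨S, Finset.Subset.refl _, hST, by omega, hS⟩

lemma mem_gen {U A F : Finset V} {y : V} : y ∈ (U \ F) \ A ↔ y ∈ U ∧ y ∉ F ∧ y ∉ A := by
  simp only [Finset.mem_sdiff]; tauto

lemma del_eq (G : SimpleGraph V) {U A : Finset V} {x : V} {r : ℕ}
    (hAU : A ⊆ U) (hxU : x ∈ U) (hxA : x ∉ A) (hAne : A.Nonempty)
    (hA' : ConnOn G (insert x A)) :
    delC (SigmaC G U A (r+1)) x = SigmaC G U (insert x A) r := by
  ext H
  constructor
  · rintro ⟨⟨F, ⟨hFU, hFc, hFA, hFconn⟩, hHsub⟩, hxH⟩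
    by_cases hxF : x ∈ F
    · refine ⟨F.erase x, ⟨(Finset.erase_subset _ _).trans hFU,
        by rw [Finset.card_erase_of_mem hxF, hFc]; omega, ?_, ?_⟩, ?_⟩
      · ext y
        simp only [Finset.mem_inter, Finset.mem_erase, Finset.mem_insert,
          Finset.notMem_empty, iff_false]
        rintro ⟨⟨hyx, hyF⟩, (rfl | hyA)⟩
        · exact hyx rfl
        · exact Finset.eq_empty_iff_forall_notMem.mp hFA y (Finset.mem_inter.mpr ⟨hyF, hyA⟩)
      · have : F.erase x ∪ insert x A = F ∪ A := by
          ext y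
          simp only [Finset.mem_union, Finset.mem_erase, Finset.mem_insert]
          constructor
          · rintro (⟨_, h⟩ | (rfl | h))
            · exact Or.inl h
            · exact Or.inl hxF
            · exact Or.inr h
          · rintro (h | h)
            · by_cases hy : y = x
              · exact Or.inr (Or.inl hy)
              · exact Or.inl ⟨hy, h⟩
            · exact Or.inr (Or.inr h)
        rw [this]; exact hFconn
      · intro y hy
        have h1 := mem_gen.mp (hHsub hy)
        have hyx : y ≠ x := fun h => hxH (h ▸ hy)
        exact mem_gen.mpr ⟨h1.1, fun h => h1.2.1 (Finset.mem_of_mem_erase h),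
          by simp only [Finset.mem_insert]; rintro (h | h); exact hyx h; exact h1.2.2 h⟩
    · -- x ∉ F : grow insert x A inside insert x (F ∪ A)
      have hdisj : ∀ y, y ∈ F → y ∉ A := fun y hyF hyA =>
        Finset.eq_empty_iff_forall_notMem.mp hFA y (Finset.mem_inter.mpr ⟨hyF, hyA⟩)
      have hTconn : ConnOn G ((F ∪ A) ∪ insert x A) := by
        refine conn_union hFconn hA' ?_
        obtain ⟨a, ha⟩ := hAne
        exact ⟨a, Finset.mem_inter.mpr ⟨Finset.mem_union_right _ ha,
          Finset.mem_insert_of_mem ha⟩⟩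
      have hTeq : (F ∪ A) ∪ insert x A = insert x (F ∪ A) := by
        ext y
        simp only [Finset.mem_union, Finset.mem_insert]
        tauto
      rw [hTeq] at hTconn
      have hxFA : x ∉ F ∪ A := by
        simp only [Finset.mem_union]; rintro (h | h); exact hxF h; exact hxA h
      have hTcard : (insert x (F ∪ A)).card = r + 1 + A.card + 1 := by
        rw [Finset.card_insert_of_notMem hxFA, Finset.card_union_of_disjoint
          (Finset.disjoint_left.mpr hdisj), hFc]
      have hA'sub : insert x A ⊆ insert x (F ∪ A) :=
        Finset.insert_subset_insert _ (Finset.subset_union_right)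
      have hA'card : (insert x A).card = A.card + 1 := Finset.card_insert_of_notMem hxA
      obtain ⟨S', hS1, hS2, hS3, hS4⟩ := conn_grow hTconn (A.card + 1 + r) (by omega)
        (insert x A) hA'sub ⟨x, Finset.mem_insert_self _ _⟩ hA' (by omega)
      refine ⟨S' \ insert x A, ⟨?_, ?_, ?_, ?_⟩, ?_⟩
      · refine (Finset.sdiff_subset).trans (hS2.trans ?_)
        exact Finset.insert_subset hxU (Finset.union_subset hFU hAU)
      · rw [Finset.card_sdiff_of_subset hS1, hS3, hA'card]; omega
      · ext y
        simp only [Finset.mem_inter, Finset.mem_sdiff, Finset.notMem_empty, iff_false]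
        tauto
      · rw [Finset.sdiff_union_of_subset hS1]; exact hS4
      · intro y hy
        have h1 := mem_gen.mp (hHsub hy)
        have hyx : y ≠ x := fun h => hxH (h ▸ hy)
        refine mem_gen.mpr ⟨h1.1, fun h => ?_, ?_⟩
        · -- y ∈ S' \ insert x A ⊆ F
          have hyT := hS2 (Finset.mem_sdiff.mp h).1
          have hynA' := (Finset.mem_sdiff.mp h).2
          rw [Finset.mem_insert] at hyT
          rcases hyT with rfl | hyFA
          · exact hyx rfl
          · rcases Finset.mem_union.mp hyFA with h2 | h2
            · exact h1.2.1 h2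
            · exact hynA' (Finset.mem_insert_of_mem h2)
        · simp only [Finset.mem_insert]
          rintro (h | h); exact hyx h; exact h1.2.2 h
  · rintro ⟨F', ⟨hFU, hFc, hFA, hFconn⟩, hHsub⟩
    have hxF' : x ∉ F' := fun h =>
      Finset.eq_empty_iff_forall_notMem.mp hFA x
        (Finset.mem_inter.mpr ⟨h, Finset.mem_insert_self _ _⟩)
    have hdisj : ∀ y, y ∈ F' → y ∉ insert x A := fun y hyF hyA =>
      Finset.eq_empty_iff_forall_notMem.mp hFA y (Finset.mem_inter.mpr ⟨hyF, hyA⟩)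
    have hxH : x ∉ H := fun h => by
      have := mem_gen.mp (hHsub h)
      exact this.2.2 (Finset.mem_insert_self _ _)
    refine ⟨⟨insert x F', ⟨Finset.insert_subset hxU hFU,
      by rw [Finset.card_insert_of_notMem hxF', hFc], ?_, ?_⟩, ?_⟩, hxH⟩
    · ext y
      simp only [Finset.mem_inter, Finset.mem_insert, Finset.notMem_empty, iff_false]
      rintro ⟨(rfl | hyF), hyA⟩
      · exact hxA hyA
      · exact hdisj y hyF (Finset.mem_insert_of_mem hyA)
    · have : insert x F' ∪ A = F' ∪ insert x A := by
        ext y; simp only [Finset.mem_union, Finset.mem_insert]; tauto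
      rw [this]; exact hFconn
    · intro y hy
      have h1 := mem_gen.mp (hHsub hy)
      have h2 : y ∉ insert x A := h1.2.2
      rw [Finset.mem_insert] at h2
      push_neg at h2
      refine mem_gen.mpr ⟨h1.1, ?_, fun h => h2.2 h⟩
      simp only [Finset.mem_insert]
      rintro (h | h); exact h2.1 h; exact h1.2.1 h

lemma link_eq (G : SimpleGraph V) {U A : Finset V} {x : V} {r : ℕ}
    (hxU : x ∈ U) (hxA : x ∉ A) :
    linkC (SigmaC G U A r) x = SigmaC G (U.erase x) A r := by
  ext H
  constructor
  · rintro ⟨_, hxH, F, ⟨hFU, hFc, hFA, hFconn⟩, hsub⟩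
    have hxgen := mem_gen.mp (hsub (Finset.mem_insert_self _ _))
    refine ⟨F, ⟨fun y hy => Finset.mem_erase.mpr
      ⟨fun h => hxgen.2.1 (h ▸ hy), hFU hy⟩, hFc, hFA, hFconn⟩, ?_⟩
    intro y hy
    have h1 := mem_gen.mp (hsub (Finset.mem_insert_of_mem hy))
    exact mem_gen.mpr ⟨Finset.mem_erase.mpr ⟨fun h => hxH (h ▸ hy), h1.1⟩, h1.2.1, h1.2.2⟩
  · rintro ⟨F, ⟨hFU, hFc, hFA, hFconn⟩, hsub⟩
    have hxF : x ∉ F := fun h => (Finset.mem_erase.mp (hFU h)).1 rfl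
    have hxH : x ∉ H := fun h => (Finset.mem_erase.mp (mem_gen.mp (hsub h)).1).1 rfl
    have hFU' : F ⊆ U := hFU.trans (Finset.erase_subset _ _)
    have hmem : ∀ K : Finset V, K ⊆ insert x H → K ∈ SigmaC G U A r := by
      intro K hK
      refine ⟨F, ⟨hFU', hFc, hFA, hFconn⟩, fun y hy => ?_⟩
      rcases Finset.mem_insert.mp (hK hy) with rfl | hyH
      · exact mem_gen.mpr ⟨hxU, hxF, hxA⟩
      · have h1 := mem_gen.mp (hsub hyH)
        exact mem_gen.mpr ⟨(Finset.erase_subset _ _) h1.1, h1.2.1, h1.2.2⟩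
    exact ⟨hmem H (Finset.subset_insert _ _), hxH, hmem _ (Finset.Subset.refl _)⟩

lemma gen_card {U A F : Finset V} {r : ℕ} (hAU : A ⊆ U) (hFU : F ⊆ U)
    (hFc : F.card = r) (hFA : F ∩ A = ∅) :
    ((U \ F) \ A).card + r + A.card = U.card := by
  have hAUF : A ⊆ U \ F := by
    intro y hy
    refine Finset.mem_sdiff.mpr ⟨hAU hy, fun h => ?_⟩
    exact Finset.eq_empty_iff_forall_notMem.mp hFA y (Finset.mem_inter.mpr ⟨h, hy⟩)
  have h1 : (U \ F).card = U.card - r := by rw [Finset.card_sdiff_of_subset hFU, hFc]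
  have h2 := Finset.card_sdiff_of_subset hAUF
  have h3 := Finset.card_le_card hFU
  have h4 := Finset.card_le_card hAUF
  omega

lemma face_card_le {G : SimpleGraph V} {U A H : Finset V} {r : ℕ} (hAU : A ⊆ U)
    (hH : H ∈ SigmaC G U A r) : H.card + r + A.card ≤ U.card := by
  obtain ⟨F, ⟨hFU, hFc, hFA, _⟩, hsub⟩ := hH
  have := gen_card hAU hFU hFc hFA
  have := Finset.card_le_card hsub
  omega

lemma shed_lemma (G : SimpleGraph V) {U A : Finset V} {x : V} {r : ℕ}
    (hAU : A ⊆ U) (hxU : x ∈ U) (hxA : x ∉ A) (hAne : A.Nonempty)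
    (hA' : ConnOn G (insert x A)) :
    IsShedding (SigmaC G U A (r+1)) x := by
  intro F₀ ⟨hmem, hmax⟩
  have hdel := del_eq G (r := r) hAU hxU hxA hAne hA'
  rw [hdel] at hmem
  obtain ⟨F', hF', hsub⟩ := hmem
  -- the generator itself is a face of the deletion
  have hgen : (U \ F') \ insert x A ∈ delC (SigmaC G U A (r+1)) x := by
    rw [hdel]; exact ⟨F', hF', Finset.Subset.refl _⟩
  have hF₀eq : F₀ = (U \ F') \ insert x A := hmax _ hgen hsub
  obtain ⟨hFU', hFc', hFA', _⟩ := hF'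
  have hA'U : insert x A ⊆ U := Finset.insert_subset hxU hAU
  have hA'c : (insert x A).card = A.card + 1 := Finset.card_insert_of_notMem hxA
  have hcard : F₀.card + r + 1 + A.card = U.card := by
    have := gen_card hA'U hFU' hFc' hFA'
    rw [hF₀eq]; omega
  constructor
  · rw [hF₀eq]; exact hgen.1
  · intro H hH hFH
    have := face_card_le hAU hH
    exact Finset.eq_of_subset_of_card_le hFH (by omega)

lemma main_aux (G : SimpleGraph V) :
    ∀ n r (U A : Finset V), r * (Fintype.card V + 1) + U.card ≤ n → A ⊆ U →
      A.Nonempty → ConnOn G A → VD (SigmaC G U A r) := by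
  intro n
  induction n with
  | zero =>
    intro r U A hn hAU hAne _
    have h1 := Finset.card_le_card hAU
    have h2 := Finset.card_pos.mpr hAne
    omega
  | succ n ih =>
    intro r U A hn hAU hAne hconn
    match r with
    | 0 =>
      have heq : SigmaC G U A 0 = {t | t ⊆ U \ A} := by
        ext H
        constructor
        · rintro ⟨F, ⟨_, hFc, _, _⟩, hsub⟩
          rw [Finset.card_eq_zero] at hFc
          subst hFc
          rwa [Finset.sdiff_empty] at hsub
        · intro h
          exact ⟨∅, ⟨Finset.empty_subset _, Finset.card_empty, Finset.empty_inter _,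
            by rw [Finset.empty_union]; exact hconn⟩, by rwa [Finset.sdiff_empty]⟩
      rw [heq]; exact VD.simplex _
    | r + 1 =>
      rcases Set.eq_empty_or_nonempty (Supp G U A (r+1)) with hemp | ⟨F, hF⟩
      · have heq : SigmaC G U A (r+1) = ∅ := by
          ext H
          simp only [SigmaC, Set.mem_setOf_eq, Set.mem_empty_iff_false, iff_false]
          rintro ⟨F, hF, _⟩
          rw [hemp] at hF
          exact hF
        rw [heq]; exact VD.void
      · obtain ⟨hFU, hFc, hFA, hFconn⟩ := hF
        have hdisj : Disjoint F A := Finset.disjoint_iff_inter_eq_empty.mpr hFA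
        have hlt : A.card < (F ∪ A).card := by
          rw [Finset.card_union_of_disjoint hdisj, hFc]; omega
        obtain ⟨x, hxFA, hxA, hA'⟩ := conn_step hconn hFconn Finset.subset_union_right hAne hlt
        have hxF : x ∈ F := by
          rcases Finset.mem_union.mp hxFA with h | h
          · exact h
          · exact absurd h hxA
        have hxU : x ∈ U := hFU hxF
        have hUc : U.card ≤ Fintype.card V := Finset.card_le_univ U
        have hmeas : r * (Fintype.card V + 1) + U.card ≤ n := by
          have hexp : (r+1) * (Fintype.card V + 1)
              = r * (Fintype.card V + 1) + Fintype.card V + 1 := by ring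
          omega
        have hdel := del_eq G (r := r) hAU hxU hxA hAne hA'
        have hdelVD : VD (delC (SigmaC G U A (r+1)) x) := by
          rw [hdel]
          exact ih r U (insert x A) hmeas (Finset.insert_subset hxU hAU)
            ⟨x, Finset.mem_insert_self _ _⟩ hA'
        by_cases hall : ∀ F' ∈ Supp G U A (r+1), x ∈ F'
        · have heq : SigmaC G U A (r+1) = delC (SigmaC G U A (r+1)) x := by
            ext H
            constructor
            · intro hH
              refine ⟨hH, fun hxH => ?_⟩
              obtain ⟨F', hF', hsub⟩ := hH
              exact (mem_gen.mp (hsub hxH)).2.1 (hall F' hF')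
            · exact fun h => h.1
          rw [heq]; exact hdelVD
        · push_neg at hall
          obtain ⟨F₀, hF₀, hxF₀⟩ := hall
          refine VD.step _ x ?_ (shed_lemma G hAU hxU hxA hAne hA') ?_ hdelVD
          · refine ⟨F₀, hF₀, fun y hy => ?_⟩
            rw [Finset.mem_singleton] at hy
            subst hy
            exact mem_gen.mpr ⟨hxU, hxF₀, hxA⟩
          · rw [link_eq G hxU hxA]
            refine ih (r+1) (U.erase x) A ?_
              (fun y hy => Finset.mem_erase.mpr ⟨fun h => hxA (h ▸ hy), hAU hy⟩) hAne hconn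
            rw [Finset.card_erase_of_mem hxU]
            have := Finset.card_pos.mpr hAne
            have h1 := Finset.card_le_card hAU
            omega

/-- If `A ⊆ V(G)` is nonempty and `G[A]` is connected, then for every
`r ≥ 1` the complex `Σ_r(A,G)` is vertex decomposable. -/
theorem sigma_vertexDecomposable_of_connected {V : Type*} [Fintype V] [DecidableEq V]
    (G : SimpleGraph V) (A : Finset V) (hA : A.Nonempty) (hconn : ConnOn G A) :
    ∀ r : ℕ, 1 ≤ r → VD (SigmaC G Finset.univ A r) := by
  intro r _
  exact main_aux G (r * (Fintype.card V + 1) + (Finset.univ : Finset V).card) r _ A le_rfl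
    (Finset.subset_univ A) hA hconn
end

section
/- Let G be a finite simple graph and r ≥ 2 an integer. Then Σ_r(G) is vertex decomposable if and only if either |E(Con_r(G))| ≤ 1, or there exist a positive integer k and distinct vertices x_1, …, x_k of G such that: (a) for each i ∈ {0,1,…,k−1}, E(Con_r(G_i \ N_{G_i}[x_{i+1}])) = ∅, where G_0 = G and G_i is the induced subgraph of G on V(G) \ {x_1,…,x_i}; and (b) k is the least positive integer with |E(Con_r(G \ {x_1,…,x_k}))| ≤ 1 (i.e., |E(Con_r(G \ {x_1,…,x_j}))| ≥ 2 for every j < k). -/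
open Finset

variable {V : Type*} [Fintype V] [DecidableEq V]

/-- The set `{x_1, …, x_j}` of the first `j` vertices of the sequence `x`. -/
def firstVerts {V : Type*} [DecidableEq V] {k : ℕ} (x : Fin k → V) (j : ℕ) : Finset V :=
  (Finset.univ.filter (fun t : Fin k => (t : ℕ) < j)).image x

/-- The closed neighborhood `N_G[x]` as a finset. -/
def closedNbhd {V : Type*} [Fintype V] [DecidableEq V]
    (G : SimpleGraph V) [DecidableRel G.Adj] (x : V) : Finset V :=
  insert x (G.neighborFinset x)

namespace VDAux

set_option linter.unusedSectionVars false

open Finset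

variable {V : Type*} [Fintype V] [DecidableEq V]

/-- Adjacency within a finset. -/
def Rel (G : SimpleGraph V) (s : Finset V) (a b : V) : Prop :=
  G.Adj a b ∧ a ∈ s ∧ b ∈ s

lemma rel_symm (G : SimpleGraph V) (s : Finset V) : Symmetric (Rel G s) := by
  rintro a b ⟨h1, h2, h3⟩; exact ⟨h1.symm, h3, h2⟩

lemma rel_mono (G : SimpleGraph V) {s t : Finset V} (hst : s ⊆ t) {a b : V}
    (h : Rel G s a b) : Rel G t a b := ⟨h.1, hst h.2.1, hst h.2.2⟩

lemma rtg_mono (G : SimpleGraph V) {s t : Finset V} (hst : s ⊆ t) {a b : V}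
    (h : Relation.ReflTransGen (Rel G s) a b) :
    Relation.ReflTransGen (Rel G t) a b :=
  Relation.ReflTransGen.mono (fun _ _ hr => rel_mono G hst hr) a b h

lemma rtg_mem {G : SimpleGraph V} {s : Finset V} {a b : V} (ha : a ∈ s)
    (h : Relation.ReflTransGen (Rel G s) a b) : b ∈ s := by
  induction h with
  | refl => exact ha
  | tail _ hr ih => exact hr.2.2

/-- Characterization of connectivity of induced subgraphs. -/
lemma connOn_iff {G : SimpleGraph V} {s : Finset V} :
    ConnOn G s ↔ s.Nonempty ∧ ∀ a ∈ s, ∀ b ∈ s, Relation.ReflTransGen (Rel G s) a b := by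
  rw [ConnOn, SimpleGraph.connected_iff]
  constructor
  · rintro ⟨hpre, hne⟩
    obtain ⟨⟨v, hv⟩⟩ := hne
    refine ⟨⟨v, by simpa using hv⟩, ?_⟩
    intro a ha b hb
    obtain ⟨w⟩ := hpre ⟨a, by simpa using ha⟩ ⟨b, by simpa using hb⟩
    clear hpre
    have key : ∀ (A B : (s : Set V)), (G.induce (s : Set V)).Walk A B →
        Relation.ReflTransGen (Rel G s) A.1 B.1 := by
      intro A B w
      induction w with
      | nil => exact Relation.ReflTransGen.refl
      | @cons u x y h p ih =>
        exact Relation.ReflTransGen.head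
          ⟨by simpa [SimpleGraph.induce] using h, by simpa using u.2, by simpa using x.2⟩ ih
    exact key _ _ w
  · rintro ⟨⟨v, hv⟩, hchain⟩
    have key : ∀ a b, Relation.ReflTransGen (Rel G s) a b →
        ∀ (ha : a ∈ (s : Set V)) (hb : b ∈ (s : Set V)),
          (G.induce (s : Set V)).Reachable ⟨a, ha⟩ ⟨b, hb⟩ := by
      intro a b h
      induction h with
      | refl => intro ha hb; exact SimpleGraph.Reachable.refl _
      | tail hprev hr ih =>
        intro ha hb
        exact (ih ha (by simpa using hr.2.1)).trans
          (SimpleGraph.Adj.reachable (by simpa [SimpleGraph.induce] using hr.1))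
    refine ⟨?_, ⟨⟨v, by simpa using hv⟩⟩⟩
    rintro ⟨a, ha⟩ ⟨b, hb⟩
    exact key a b (hchain a (by simpa using ha) b (by simpa using hb)) ha hb

lemma connOn_singleton (G : SimpleGraph V) (v : V) : ConnOn G {v} := by
  rw [connOn_iff]
  refine ⟨⟨v, mem_singleton_self v⟩, ?_⟩
  intro a ha b hb
  rw [mem_singleton] at ha hb
  subst ha; subst hb
  exact Relation.ReflTransGen.refl

/-- Adding a vertex adjacent to a member keeps connectivity. -/
lemma connOn_insert {G : SimpleGraph V} {s : Finset V} {a z : V}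
    (hconn : ConnOn G s) (ha : a ∈ s) (hadj : G.Adj z a) :
    ConnOn G (insert z s) := by
  rw [connOn_iff] at hconn ⊢
  obtain ⟨hne, hchain⟩ := hconn
  have hsym : ∀ ⦃u v⦄, Relation.ReflTransGen (Rel G (insert z s)) u v → Relation.ReflTransGen (Rel G (insert z s)) v u :=
    @Std.Symm.symm _ _ (@Relation.ReflTransGen.symmetric _ _ ⟨fun _ _ h => rel_symm G (insert z s) h⟩)
  have key : ∀ u ∈ insert z s, Relation.ReflTransGen (Rel G (insert z s)) u a := by
    intro u hu
    rcases mem_insert.mp hu with rfl | hu'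
    · exact Relation.ReflTransGen.single ⟨hadj, hu, mem_insert_of_mem ha⟩
    · exact rtg_mono G (subset_insert z s) (hchain u hu' a ha)
  refine ⟨⟨a, mem_insert_of_mem ha⟩, fun u hu v hv => ?_⟩
  exact (key u hu).trans (hsym (key v hv))

/-- A connected set with at least two elements: every element has a neighbor inside. -/
lemma exists_neighbor {G : SimpleGraph V} {s : Finset V} (hconn : ConnOn G s)
    {x y : V} (hx : x ∈ s) (hy : y ∈ s) (hxy : x ≠ y) :
    ∃ c ∈ s, G.Adj x c := by
  rw [connOn_iff] at hconn
  have h := hconn.2 x hx y hy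
  rcases Relation.ReflTransGen.cases_head h with rfl | ⟨c, hr, _⟩
  · exact absurd rfl hxy
  · exact ⟨c, hr.2.2, hr.1⟩

end VDAux
namespace VDAux

variable {V : Type*} [Fintype V] [DecidableEq V]

open Finset

/-- Chains of given length. -/
def chainN (R : V → V → Prop) : ℕ → V → V → Prop
  | 0, a, b => a = b
  | n + 1, a, b => ∃ c, R a c ∧ chainN R n c b

lemma chainN_snoc {R : V → V → Prop} : ∀ {n a b c}, chainN R n a b → R b c →
    chainN R (n + 1) a c := by
  intro n
  induction n with
  | zero => rintro a b c rfl h; exact ⟨c, h, rfl⟩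
  | succ m ih =>
    rintro a b c ⟨d, had, hdb⟩ hbc
    exact ⟨d, had, ih hdb hbc⟩

lemma rtg_iff_chainN {R : V → V → Prop} {a b : V} :
    Relation.ReflTransGen R a b ↔ ∃ n, chainN R n a b := by
  constructor
  · intro h
    induction h with
    | refl => exact ⟨0, rfl⟩
    | tail _ hr ih =>
      obtain ⟨n, hn⟩ := ih
      exact ⟨n + 1, chainN_snoc hn hr⟩
  · rintro ⟨n, hn⟩
    induction n generalizing a with
    | zero => rw [show a = b from hn]
    | succ m ih =>
      obtain ⟨c, hac, hcb⟩ := hn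
      exact Relation.ReflTransGen.head hac (ih hcb)

/-- The key graph lemma: from a connected set `s` with a connected nonempty "core" `B`,
one can remove some vertex outside `B` keeping connectivity. -/
lemma exists_removable {G : SimpleGraph V} {s B : Finset V}
    (hconn : ConnOn G s) (hBs : B ⊆ s) (hBne : B.Nonempty) (hBconn : ConnOn G B)
    (hsB : (s \ B).Nonempty) :
    ∃ f ∈ s \ B, ConnOn G (s.erase f) := by
  classical
  rw [connOn_iff] at hconn
  obtain ⟨b0, hb0⟩ := hBne
  -- every vertex of `s` has a chain to some element of `B`
  have hex : ∀ u ∈ s, ∃ n, ∃ b ∈ B, chainN (Rel G s) n u b := by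
    intro u hu
    obtain ⟨n, hn⟩ := rtg_iff_chainN.mp (hconn.2 u hu b0 (hBs hb0))
    exact ⟨n, b0, hb0, hn⟩
  have hdec : ∀ u, DecidablePred fun n => ∃ b ∈ B, chainN (Rel G s) n u b :=
    fun u n => Classical.dec _
  let d : V → ℕ := fun u =>
    if hu : ∃ n, ∃ b ∈ B, chainN (Rel G s) n u b then @Nat.find _ (hdec u) hu else 0
  have d_spec : ∀ u ∈ s, ∃ b ∈ B, chainN (Rel G s) (d u) u b := by
    intro u hu
    have h := hex u hu
    simp only [d, dif_pos h]
    exact @Nat.find_spec _ (hdec u) h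
  have d_min : ∀ u ∈ s, ∀ m, (∃ b ∈ B, chainN (Rel G s) m u b) → d u ≤ m := by
    intro u hu m hm
    have h := hex u hu
    simp only [d, dif_pos h]
    exact @Nat.find_min' _ (hdec u) h m hm
  -- f maximizes d over s \ B
  obtain ⟨f, hf, hfmax⟩ := Finset.exists_max_image (s \ B) d hsB
  refine ⟨f, hf, ?_⟩
  have hfs : f ∈ s := (Finset.mem_sdiff.mp hf).1
  have hfB : f ∉ B := (Finset.mem_sdiff.mp hf).2
  -- every u ≠ f in s reaches B inside s.erase f
  have reach : ∀ n u, u ∈ s → u ≠ f → d u ≤ n →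
      ∃ b ∈ B, Relation.ReflTransGen (Rel G (s.erase f)) u b := by
    intro n
    induction n with
    | zero =>
      intro u hu huf hdu
      obtain ⟨b, hb, hchain⟩ := d_spec u hu
      rw [Nat.le_zero.mp hdu] at hchain
      exact ⟨b, hb, by rw [show u = b from hchain]⟩
    | succ m ih =>
      intro u hu huf hdu
      obtain ⟨b, hb, hchain⟩ := d_spec u hu
      rcases Nat.eq_zero_or_pos (d u) with h0 | hpos
      · rw [h0] at hchain
        exact ⟨b, hb, by rw [show u = b from hchain]⟩
      · obtain ⟨p, hp⟩ := Nat.exists_eq_add_of_lt hpos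
        rw [hp, zero_add] at hchain
        obtain ⟨c, huc, hcb⟩ := hchain
        have hcs : c ∈ s := huc.2.2
        have hdc : d c ≤ p := d_min c hcs p ⟨b, hb, hcb⟩
        by_cases hcB : c ∈ B
        · refine ⟨c, hcB, Relation.ReflTransGen.single
            ⟨huc.1, Finset.mem_erase.mpr ⟨huf, hu⟩, Finset.mem_erase.mpr ⟨?_, hcs⟩⟩⟩
          rintro rfl; exact hfB hcB
        · have hcf : c ≠ f := by
            rintro rfl
            have huB : u ∉ B := by
              intro huB
              have : d u ≤ 0 := d_min u hu 0 ⟨u, huB, rfl⟩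
              omega
            have h1 : d u ≤ d c := hfmax u (Finset.mem_sdiff.mpr ⟨hu, huB⟩)
            omega
          have hstep : Rel G (s.erase f) u c :=
            ⟨huc.1, Finset.mem_erase.mpr ⟨huf, hu⟩, Finset.mem_erase.mpr ⟨hcf, hcs⟩⟩
          obtain ⟨b', hb', hrest⟩ := ih c hcs hcf (by omega)
          exact ⟨b', hb', Relation.ReflTransGen.head hstep hrest⟩
  -- assemble connectivity of s.erase f
  rw [connOn_iff]
  have hBsub : B ⊆ s.erase f := fun x hx =>
    Finset.mem_erase.mpr ⟨fun h => hfB (h ▸ hx), hBs hx⟩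
  refine ⟨⟨b0, hBsub hb0⟩, ?_⟩
  have hsym : ∀ ⦃u v⦄, Relation.ReflTransGen (Rel G (s.erase f)) u v → Relation.ReflTransGen (Rel G (s.erase f)) v u :=
    @Std.Symm.symm _ _ (@Relation.ReflTransGen.symmetric _ _ ⟨fun _ _ h => rel_symm G (s.erase f) h⟩)
  have toB : ∀ u ∈ s.erase f, ∃ b ∈ B, Relation.ReflTransGen (Rel G (s.erase f)) u b := by
    intro u hu
    exact reach (d u) u (Finset.mem_of_mem_erase hu) (Finset.ne_of_mem_erase hu) le_rfl
  rw [connOn_iff] at hBconn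
  intro u hu v hv
  obtain ⟨bu, hbu, hu2⟩ := toB u hu
  obtain ⟨bv, hbv, hv2⟩ := toB v hv
  have hmid : Relation.ReflTransGen (Rel G (s.erase f)) bu bv :=
    rtg_mono G hBsub (hBconn.2 bu hbu bv hbv)
  exact (hu2.trans hmid).trans (hsym hv2)

end VDAux
namespace VDAux

variable {V : Type*} [Fintype V] [DecidableEq V]

open Finset

/-- Complement complex of a clutter `C` inside the ground set `M`. -/
def Gam (C : Set (Finset V)) (M : Finset V) : Set (Finset V) :=
  {H | ∃ F ∈ C, H ⊆ M \ F}

/-- The clutter is `r`-uniform with members inside `M`. -/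
def Unif (C : Set (Finset V)) (M : Finset V) (r : ℕ) : Prop :=
  ∀ F ∈ C, F ⊆ M ∧ F.card = r

/-- Exchange property at `z`. -/
def SwapAt (C : Set (Finset V)) (z : V) : Prop :=
  ∀ F ∈ C, z ∉ F → ∃ f ∈ F, insert z (F.erase f) ∈ C

lemma sdiff_subset_of_sdiff_subset {M W W' : Finset V} (hW' : W' ⊆ M)
    (h : M \ W ⊆ M \ W') : W' ⊆ W := by
  intro a ha
  by_contra haW
  have : a ∈ M \ W := mem_sdiff.mpr ⟨hW' ha, haW⟩
  exact (mem_sdiff.mp (h this)).2 ha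

lemma gam_facet {C : Set (Finset V)} {M : Finset V} {r : ℕ} (hU : Unif C M r)
    {W : Finset V} (hW : W ∈ C) : IsFacet (Gam C M) (M \ W) := by
  refine ⟨⟨W, hW, Subset.rfl⟩, ?_⟩
  rintro H ⟨W', hW', hH⟩ hsub
  have h1 : W' ⊆ W := sdiff_subset_of_sdiff_subset (hU W' hW').1 (hsub.trans hH)
  have h2 : W' = W := eq_of_subset_of_card_le h1 (le_of_eq ((hU W hW).2.trans (hU W' hW').2.symm))
  exact hsub.antisymm (hH.trans (by rw [h2]))

lemma gam_shedding {C : Set (Finset V)} {M : Finset V} {r : ℕ} (hU : Unif C M r)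
    {z : V} (hz : SwapAt C z) : IsShedding (Gam C M) z := by
  rintro H ⟨⟨⟨W, hW, hHW⟩, hzH⟩, hmax⟩
  by_cases hzW : z ∈ W
  · have hMW : M \ W ∈ delC (Gam C M) z := ⟨⟨W, hW, Subset.rfl⟩, by simp [hzW]⟩
    have := hmax _ hMW hHW
    rw [this]
    exact gam_facet hU hW
  · obtain ⟨f, hf, hsw⟩ := hz W hW hzW
    set W'' := insert z (W.erase f) with hW''
    have hzW'' : z ∈ W'' := mem_insert_self _ _
    have hsub : H ⊆ M \ W'' := by
      intro a haH
      have haMW := hHW haH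
      rw [mem_sdiff] at haMW ⊢
      refine ⟨haMW.1, ?_⟩
      rw [hW'', mem_insert]
      rintro (rfl | haW)
      · exact hzH haH
      · exact haMW.2 (mem_of_mem_erase haW)
    have hMW'' : M \ W'' ∈ delC (Gam C M) z := ⟨⟨W'', hsw, Subset.rfl⟩, by simp [hzW'']⟩
    have := hmax _ hMW'' hsub
    rw [this]
    exact gam_facet hU hsw

lemma gam_swap_of_shedding {C : Set (Finset V)} {M : Finset V} {r : ℕ} (hU : Unif C M r)
    {z : V} (hzM : z ∈ M) (hshed : IsShedding (Gam C M) z) : SwapAt C z := by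
  intro F hF hzF
  set T := (M \ F).erase z with hT
  have hTdel : T ∈ delC (Gam C M) z :=
    ⟨⟨F, hF, erase_subset _ _⟩, notMem_erase _ _⟩
  have hTnotfacet : ¬ IsFacet (Gam C M) T := by
    rintro ⟨-, hmax⟩
    have h1 : T ⊆ M \ F := erase_subset _ _
    have h2 := hmax (M \ F) ⟨F, hF, Subset.rfl⟩ h1
    have hzMF : z ∈ M \ F := mem_sdiff.mpr ⟨hzM, hzF⟩
    rw [← h2] at hzMF
    exact notMem_erase z _ hzMF
  have hTnot : ¬ IsFacet (delC (Gam C M) z) T := fun h => hTnotfacet (hshed T h)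
  -- so T is not maximal in the deletion
  have : ∃ H ∈ delC (Gam C M) z, T ⊆ H ∧ T ≠ H := by
    by_contra hcon
    push_neg at hcon
    exact hTnot ⟨hTdel, fun H hH hTH => hcon H hH hTH⟩
  obtain ⟨H, ⟨⟨W', hW', hHW'⟩, hzH⟩, hTH, hTneH⟩ := this
  have hTsub : T ⊆ M \ W' := hTH.trans hHW'
  have hW'sub : W' ⊆ insert z F := by
    intro a haW'
    by_contra ha
    rw [mem_insert] at ha
    push_neg at ha
    have haM : a ∈ M := (hU W' hW').1 haW'
    have : a ∈ T := by
      rw [hT, mem_erase, mem_sdiff]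
      exact ⟨ha.1, haM, ha.2⟩
    exact (mem_sdiff.mp (hTsub this)).2 haW'
  by_cases hzW' : z ∈ W'
  · -- W' is the swap
    have hcard : (W'.erase z).card = r - 1 := by
      rw [card_erase_of_mem hzW', (hU W' hW').2]
    have hsubF : W'.erase z ⊆ F := by
      intro a ha
      rw [mem_erase] at ha
      rcases mem_insert.mp (hW'sub ha.2) with rfl | h
      · exact absurd rfl ha.1
      · exact h
    have hrpos : 1 ≤ r := by
      have := (hU W' hW').2
      by_contra h
      push_neg at h
      interval_cases r
      rw [card_eq_zero] at this
      rw [this] at hzW'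
      exact absurd hzW' (notMem_empty z)
    have hlt : (W'.erase z).card < F.card := by
      rw [hcard, (hU F hF).2]; omega
    obtain ⟨f, hfF, hfW'⟩ := exists_of_ssubset (ssubset_of_subset_of_ne hsubF
      (fun h => absurd (h ▸ hlt) (lt_irrefl _)))
    refine ⟨f, hfF, ?_⟩
    have : W'.erase z = F.erase f := by
      apply eq_of_subset_of_card_le
      · intro a ha
        rw [mem_erase]
        exact ⟨fun h => hfW' (h ▸ ha), hsubF ha⟩
      · rw [card_erase_of_mem hfF, hcard, (hU F hF).2]
    have hW'eq : W' = insert z (F.erase f) := by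
      rw [← this, insert_erase hzW']
    rwa [← hW'eq]
  · -- contradiction: H = T
    have hW'F : W' ⊆ F := fun a ha => by
      rcases mem_insert.mp (hW'sub ha) with rfl | h
      · exact absurd ha hzW'
      · exact h
    have hW'eq : W' = F := eq_of_subset_of_card_le hW'F
      (le_of_eq ((hU F hF).2.trans ((hU W' hW').2).symm))
    have : H ⊆ T := by
      intro a haH
      rw [hT, mem_erase]
      exact ⟨fun h => hzH (h ▸ haH), hW'eq ▸ hHW' haH⟩
    exact absurd (hTH.antisymm this) hTneH

lemma gam_link {C : Set (Finset V)} {M : Finset V} {z : V} (hzM : z ∈ M) :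
    linkC (Gam C M) z = Gam {F ∈ C | z ∉ F} (M.erase z) := by
  ext H
  constructor
  · rintro ⟨-, hzH, W, hW, hiW⟩
    have hzW : z ∉ W := fun h =>
      (mem_sdiff.mp (hiW (mem_insert_self z H))).2 h
    refine ⟨W, ⟨hW, hzW⟩, fun a haH => ?_⟩
    have := hiW (mem_insert_of_mem haH)
    rw [mem_sdiff] at this
    rw [mem_sdiff, mem_erase]
    exact ⟨⟨fun h => hzH (h ▸ haH), this.1⟩, this.2⟩
  · rintro ⟨W, ⟨hW, hzW⟩, hH⟩
    have hzH : z ∉ H := fun h => notMem_erase z M (mem_sdiff.mp (hH h)).1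
    have hsub : H ⊆ M \ W := fun a haH => by
      have := mem_sdiff.mp (hH haH)
      exact mem_sdiff.mpr ⟨mem_of_mem_erase this.1, this.2⟩
    refine ⟨⟨W, hW, hsub⟩, hzH, W, hW, ?_⟩
    intro a ha
    rcases mem_insert.mp ha with rfl | h
    · exact mem_sdiff.mpr ⟨hzM, hzW⟩
    · exact hsub h

lemma gam_del {C : Set (Finset V)} {M : Finset V} {z : V} (hz : SwapAt C z) :
    delC (Gam C M) z = Gam ((fun F => F.erase z) '' {F ∈ C | z ∈ F}) (M.erase z) := by
  ext H
  constructor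
  · rintro ⟨⟨W, hW, hHW⟩, hzH⟩
    by_cases hzW : z ∈ W
    · refine ⟨W.erase z, ⟨W, ⟨hW, hzW⟩, rfl⟩, fun a haH => ?_⟩
      have := mem_sdiff.mp (hHW haH)
      rw [mem_sdiff, mem_erase, mem_erase]
      exact ⟨⟨fun h => hzH (h ▸ haH), this.1⟩, fun h => this.2 h.2⟩
    · obtain ⟨f, hf, hsw⟩ := hz W hW hzW
      refine ⟨(insert z (W.erase f)).erase z, ⟨insert z (W.erase f), ⟨hsw, mem_insert_self _ _⟩, rfl⟩,
        fun a haH => ?_⟩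
      have := mem_sdiff.mp (hHW haH)
      have haz : a ≠ z := fun h => hzH (h ▸ haH)
      rw [mem_sdiff, mem_erase, mem_erase]
      refine ⟨⟨haz, this.1⟩, fun hcon => ?_⟩
      rw [mem_insert] at hcon
      rcases hcon.2 with rfl | h
      · exact haz rfl
      · exact this.2 (mem_of_mem_erase h)
  · rintro ⟨F', ⟨W, ⟨hW, hzW⟩, rfl⟩, hH⟩
    have hzH : z ∉ H := fun h => notMem_erase z M (mem_sdiff.mp (hH h)).1
    refine ⟨⟨W, hW, fun a haH => ?_⟩, hzH⟩
    have := mem_sdiff.mp (hH haH)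
    rw [mem_erase] at this
    rw [mem_sdiff]
    refine ⟨this.1.2, fun haW => ?_⟩
    exact this.2 (mem_erase.mpr ⟨this.1.1, haW⟩)

lemma gam_all_mem {C : Set (Finset V)} {M : Finset V} {z : V} (hall : ∀ F ∈ C, z ∈ F) :
    Gam C M = Gam ((fun F => F.erase z) '' C) (M.erase z) := by
  ext H
  constructor
  · rintro ⟨W, hW, hHW⟩
    refine ⟨W.erase z, ⟨W, hW, rfl⟩, fun a haH => ?_⟩
    have := mem_sdiff.mp (hHW haH)
    have haz : a ≠ z := fun h => this.2 (h ▸ hall W hW)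
    rw [mem_sdiff, mem_erase, mem_erase]
    exact ⟨⟨haz, this.1⟩, fun h => this.2 h.2⟩
  · rintro ⟨F', ⟨W, hW, rfl⟩, hH⟩
    refine ⟨W, hW, fun a haH => ?_⟩
    have := mem_sdiff.mp (hH haH)
    rw [mem_erase] at this
    rw [mem_sdiff]
    exact ⟨this.1.2, fun haW => this.2 (mem_erase.mpr ⟨this.1.1, haW⟩)⟩

lemma gam_empty {M : Finset V} : Gam (∅ : Set (Finset V)) M = ∅ := by
  ext H; simp [Gam]

lemma gam_single {M W : Finset V} : Gam {W} M = {t | t ⊆ M \ W} := by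
  ext H; simp [Gam]

lemma vd_gam_subsingleton {C : Set (Finset V)} {M : Finset V}
    (h : Set.Subsingleton C) : VD (Gam C M) := by
  rcases Set.eq_empty_or_nonempty C with rfl | ⟨W, hW⟩
  · rw [gam_empty]; exact VD.void
  · have : C = {W} := h.eq_singleton_of_mem hW
    rw [this, gam_single]
    exact VD.simplex (M \ W)

end VDAux
namespace VDAux

variable {V : Type*} [Fintype V] [DecidableEq V]

open Finset

lemma sigmaG_eq_gam (G : SimpleGraph V) (U : Finset V) (r : ℕ) :
    SigmaG G U r = Gam (ConR G U r) U := rfl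

lemma supp_subset_ground {G : SimpleGraph V} {U A F : Finset V} {r : ℕ}
    (hF : F ∈ Supp G U A r) : F ⊆ U \ A := by
  intro a ha
  rw [mem_sdiff]
  refine ⟨hF.1 ha, fun haA => ?_⟩
  have : a ∈ F ∩ A := mem_inter.mpr ⟨ha, haA⟩
  rw [hF.2.2.1] at this
  exact notMem_empty a this

lemma sigmaC_eq_gam (G : SimpleGraph V) (U A : Finset V) (r : ℕ) :
    SigmaC G U A r = Gam (Supp G U A r) (U \ A) := by
  ext H
  constructor
  · rintro ⟨F, hF, hH⟩
    exact ⟨F, hF, by rwa [sdiff_sdiff_comm] at hH⟩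
  · rintro ⟨F, hF, hH⟩
    exact ⟨F, hF, by rwa [sdiff_sdiff_comm]⟩

lemma unif_conR (G : SimpleGraph V) (U : Finset V) (r : ℕ) : Unif (ConR G U r) U r :=
  fun _ hF => ⟨hF.1, hF.2.1⟩

lemma unif_supp (G : SimpleGraph V) (U A : Finset V) (r : ℕ) :
    Unif (Supp G U A r) (U \ A) r :=
  fun F hF => ⟨supp_subset_ground hF, hF.2.1⟩

lemma conR_restrict (G : SimpleGraph V) (U : Finset V) (r : ℕ) (z : V) :
    {F ∈ ConR G U r | z ∉ F} = ConR G (U.erase z) r := by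
  ext W
  constructor
  · rintro ⟨⟨hU, hc, hconn⟩, hz⟩
    exact ⟨fun a ha => mem_erase.mpr ⟨fun h => hz (h ▸ ha), hU ha⟩, hc, hconn⟩
  · rintro ⟨hU, hc, hconn⟩
    refine ⟨⟨fun a ha => mem_of_mem_erase (hU ha), hc, hconn⟩, fun hz => ?_⟩
    exact notMem_erase z U (hU hz)

lemma supp_restrict (G : SimpleGraph V) (U A : Finset V) (r : ℕ) (z : V) :
    {F ∈ Supp G U A r | z ∉ F} = Supp G (U.erase z) A r := by
  ext W
  constructor
  · rintro ⟨⟨hU, hc, hi, hconn⟩, hz⟩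
    exact ⟨fun a ha => mem_erase.mpr ⟨fun h => hz (h ▸ ha), hU ha⟩, hc, hi, hconn⟩
  · rintro ⟨hU, hc, hi, hconn⟩
    refine ⟨⟨fun a ha => mem_of_mem_erase (hU ha), hc, hi, hconn⟩, fun hz => ?_⟩
    exact notMem_erase z U (hU hz)

lemma erase_union_insert {F A : Finset V} {z : V} (hzF : z ∈ F) (hzA : z ∉ A) :
    F.erase z ∪ insert z A = F ∪ A := by
  ext a
  simp only [mem_union, mem_erase, mem_insert]
  constructor
  · rintro (⟨-, h⟩ | rfl | h)
    · exact Or.inl h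
    · exact Or.inl hzF
    · exact Or.inr h
  · rintro (h | h)
    · by_cases haz : a = z
      · exact Or.inr (Or.inl haz)
      · exact Or.inl ⟨haz, h⟩
    · exact Or.inr (Or.inr h)

lemma supp_del (G : SimpleGraph V) (U A : Finset V) (r : ℕ) (z : V)
    (hzU : z ∈ U) (hzA : z ∉ A) (hr : 1 ≤ r) :
    (fun F => F.erase z) '' {F ∈ Supp G U A r | z ∈ F} = Supp G U (insert z A) (r - 1) := by
  ext F'
  constructor
  · rintro ⟨F, ⟨⟨hU, hc, hi, hconn⟩, hzF⟩, rfl⟩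
    refine ⟨(erase_subset _ _).trans hU, by rw [card_erase_of_mem hzF, hc], ?_, ?_⟩
    · rw [← Finset.disjoint_iff_inter_eq_empty]
      rw [← Finset.disjoint_iff_inter_eq_empty] at hi
      rw [Finset.disjoint_insert_right]
      exact ⟨notMem_erase _ _, Finset.disjoint_of_subset_left (erase_subset _ _) hi⟩
    · rwa [erase_union_insert hzF hzA]
  · rintro ⟨hU, hc, hi, hconn⟩
    have hzF' : z ∉ F' := by
      intro h
      have : z ∈ F' ∩ insert z A := mem_inter.mpr ⟨h, mem_insert_self _ _⟩
      rw [hi] at this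
      exact notMem_empty z this
    refine ⟨insert z F', ⟨⟨insert_subset hzU hU, ?_, ?_, ?_⟩, mem_insert_self _ _⟩, ?_⟩
    · rw [card_insert_of_notMem hzF', hc]; omega
    · rw [← Finset.disjoint_iff_inter_eq_empty, Finset.disjoint_insert_left]
      refine ⟨hzA, ?_⟩
      rw [← Finset.disjoint_iff_inter_eq_empty] at hi
      exact Finset.disjoint_of_subset_right (Finset.subset_insert _ _) hi
    · have : insert z F' ∪ A = F' ∪ insert z A := by
        ext a
        simp only [mem_union, mem_insert]
        tauto
      rwa [this]
    · exact erase_insert hzF'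

lemma conR_del (G : SimpleGraph V) (U : Finset V) (r : ℕ) (z : V)
    (hzU : z ∈ U) (hr : 1 ≤ r) :
    (fun F => F.erase z) '' {W ∈ ConR G U r | z ∈ W} = Supp G U {z} (r - 1) := by
  ext F'
  constructor
  · rintro ⟨W, ⟨⟨hU, hc, hconn⟩, hzW⟩, rfl⟩
    refine ⟨(erase_subset _ _).trans hU, by rw [card_erase_of_mem hzW, hc], ?_, ?_⟩
    · rw [← Finset.disjoint_iff_inter_eq_empty, Finset.disjoint_singleton_right]
      exact notMem_erase _ _
    · have : W.erase z ∪ {z} = W := by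
        ext a
        simp only [mem_union, mem_erase, mem_singleton]
        constructor
        · rintro (⟨-, h⟩ | rfl)
          · exact h
          · exact hzW
        · intro h
          by_cases haz : a = z
          · exact Or.inr haz
          · exact Or.inl ⟨haz, h⟩
      rwa [this]
  · rintro ⟨hU, hc, hi, hconn⟩
    have hzF' : z ∉ F' := by
      intro h
      have : z ∈ F' ∩ {z} := mem_inter.mpr ⟨h, mem_singleton_self _⟩
      rw [hi] at this
      exact notMem_empty z this
    refine ⟨insert z F', ⟨⟨insert_subset hzU hU, ?_, ?_⟩, mem_insert_self _ _⟩, ?_⟩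
    · rw [card_insert_of_notMem hzF', hc]; omega
    · have : insert z F' = F' ∪ {z} := by
        ext a; simp only [mem_insert, mem_union, mem_singleton]; tauto
      rwa [this]
    · exact erase_insert hzF'

/-- Exchange for `Supp`: any vertex of `U \ A` adjacent to connected `A` works. -/
lemma swap_supp {G : SimpleGraph V} {U A : Finset V} {r : ℕ} {z a : V}
    (hr : 1 ≤ r) (hzU : z ∈ U) (hzA : z ∉ A) (haA : a ∈ A) (hadj : G.Adj z a)
    (hAconn : ConnOn G A) : SwapAt (Supp G U A r) z := by
  rintro F ⟨hFU, hFc, hFi, hFconn⟩ hzF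
  have hAsub : A ⊆ F ∪ A := subset_union_right
  have hAne : A.Nonempty := ⟨a, haA⟩
  have hFA : ((F ∪ A) \ A).Nonempty := by
    have hFne : F.Nonempty := by
      rw [← card_pos, hFc]; omega
    obtain ⟨f0, hf0⟩ := hFne
    refine ⟨f0, mem_sdiff.mpr ⟨mem_union_left _ hf0, fun hcon => ?_⟩⟩
    have : f0 ∈ F ∩ A := mem_inter.mpr ⟨hf0, hcon⟩
    rw [hFi] at this
    exact notMem_empty _ this
  obtain ⟨f, hf, hconn'⟩ := exists_removable hFconn hAsub hAne hAconn hFA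
  rw [mem_sdiff, mem_union] at hf
  have hfF : f ∈ F := by tauto
  have hfA : f ∉ A := hf.2
  refine ⟨f, hfF, ?_, ?_, ?_, ?_⟩
  · exact insert_subset hzU ((erase_subset _ _).trans hFU)
  · rw [card_insert_of_notMem (fun h => hzF (mem_of_mem_erase h)),
      card_erase_of_mem hfF, hFc]
    omega
  · rw [← Finset.disjoint_iff_inter_eq_empty, Finset.disjoint_insert_left]
    refine ⟨hzA, ?_⟩
    rw [← Finset.disjoint_iff_inter_eq_empty] at hFi
    exact Finset.disjoint_of_subset_left (erase_subset _ _) hFi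
  · have heq : insert z (F.erase f) ∪ A = insert z ((F ∪ A).erase f) := by
      ext b
      simp only [mem_insert, mem_union, mem_erase]
      constructor
      · rintro ((rfl | ⟨h1, h2⟩) | h)
        · exact Or.inl rfl
        · exact Or.inr ⟨h1, Or.inl h2⟩
        · refine Or.inr ⟨fun hcon => hfA (hcon ▸ h), Or.inr h⟩
      · rintro (rfl | ⟨h1, h2 | h2⟩)
        · exact Or.inl (Or.inl rfl)
        · exact Or.inl (Or.inr ⟨h1, h2⟩)
        · exact Or.inr h2
    rw [heq]
    have haE : a ∈ (F ∪ A).erase f :=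
      mem_erase.mpr ⟨fun h => hfA (h ▸ haA), mem_union_right _ haA⟩
    exact connOn_insert hconn' haE hadj

/-- Exchange for `ConR` from condition (a). -/
lemma swap_conR {G : SimpleGraph V} [DecidableRel G.Adj] {U : Finset V} {r : ℕ} {x : V}
    (hr : 2 ≤ r) (hxU : x ∈ U)
    (ha : ConR G (U \ closedNbhd G x) r = ∅) : SwapAt (ConR G U r) x := by
  rintro W ⟨hWU, hWc, hWconn⟩ hxW
  -- W must meet the closed neighborhood of x
  have hmeet : ∃ y ∈ W, y ∈ closedNbhd G x := by
    by_contra hcon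
    push_neg at hcon
    have : W ∈ ConR G (U \ closedNbhd G x) r :=
      ⟨fun b hb => mem_sdiff.mpr ⟨hWU hb, hcon b hb⟩, hWc, hWconn⟩
    rw [ha] at this
    exact this
  obtain ⟨y, hyW, hyN⟩ := hmeet
  have hadj : G.Adj x y := by
    rw [closedNbhd, mem_insert] at hyN
    rcases hyN with rfl | h
    · exact absurd hyW hxW
    · rwa [SimpleGraph.mem_neighborFinset] at h
  have hyS : ({y} : Finset V) ⊆ W := singleton_subset_iff.mpr hyW
  have hWy : (W \ {y}).Nonempty := by
    rw [sdiff_nonempty]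
    intro hcon
    have := card_le_card hcon
    rw [hWc, card_singleton] at this
    omega
  obtain ⟨f, hf, hconn'⟩ := exists_removable hWconn hyS (singleton_nonempty y)
    (connOn_singleton G y) hWy
  rw [mem_sdiff, mem_singleton] at hf
  refine ⟨f, hf.1, ?_, ?_, ?_⟩
  · exact insert_subset hxU ((erase_subset _ _).trans hWU)
  · rw [card_insert_of_notMem (fun h => hxW (mem_of_mem_erase h)),
      card_erase_of_mem hf.1, hWc]
    omega
  · have hyE : y ∈ W.erase f := mem_erase.mpr ⟨fun h => hf.2 h.symm, hyW⟩
    exact connOn_insert hconn' hyE hadj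

end VDAux
namespace VDAux

variable {V : Type*} [Fintype V] [DecidableEq V]

open Finset

lemma exists_crossing {G : SimpleGraph V} {F A : Finset V}
    (hconn : ConnOn G (F ∪ A)) (hFne : F.Nonempty) (hAne : A.Nonempty)
    (hdisj : F ∩ A = ∅) : ∃ z ∈ F, ∃ a ∈ A, G.Adj z a := by
  obtain ⟨a0, ha0⟩ := hAne
  obtain ⟨f0, hf0⟩ := hFne
  rw [connOn_iff] at hconn
  have h := hconn.2 a0 (mem_union_right _ ha0) f0 (mem_union_left _ hf0)
  have key : ∀ c, Relation.ReflTransGen (Rel G (F ∪ A)) c f0 → c ∈ A →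
      ∃ z ∈ F, ∃ a ∈ A, G.Adj z a := by
    intro c h
    induction h using Relation.ReflTransGen.head_induction_on with
    | refl =>
      intro hf0A
      have : f0 ∈ F ∩ A := mem_inter.mpr ⟨hf0, hf0A⟩
      rw [hdisj] at this
      exact absurd this (notMem_empty _)
    | head hr hrest ih =>
      rename_i a c'
      intro haA
      rcases mem_union.mp hr.2.2 with hcF | hcA
      · exact ⟨c', hcF, a, haA, hr.1.symm⟩
      · exact ih hcA
  exact key a0 h ha0

lemma ground_erase_link (U A : Finset V) (z : V) :
    (U \ A).erase z = (U.erase z) \ A := by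
  ext a; simp only [mem_erase, mem_sdiff]; tauto

lemma ground_erase_del (U A : Finset V) (z : V) :
    (U \ A).erase z = U \ insert z A := by
  ext a; simp only [mem_erase, mem_sdiff, mem_insert]; tauto

/-- Key lemma: `Σ_r(A, G)` is vertex decomposable whenever `A` is nonempty and connected. -/
lemma vd_sigmaC (G : SimpleGraph V) :
    ∀ (N : ℕ) (U A : Finset V) (r : ℕ), (U \ A).card ≤ N → A.Nonempty → ConnOn G A →
      VD (SigmaC G U A r) := by
  intro N
  induction N with
  | zero =>
    intro U A r hcard hA hconnA
    rw [sigmaC_eq_gam]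
    refine vd_gam_subsingleton fun F1 h1 F2 h2 => ?_
    have e : U \ A = ∅ := card_eq_zero.mp (Nat.le_zero.mp hcard)
    have s1 := supp_subset_ground h1
    have s2 := supp_subset_ground h2
    rw [e, subset_empty] at s1 s2
    rw [s1, s2]
  | succ n ih =>
    intro U A r hcard hA hconnA
    rw [sigmaC_eq_gam]
    by_cases hsub : Set.Subsingleton (Supp G U A r)
    · exact vd_gam_subsingleton hsub
    have hne : (Supp G U A r).Nonempty :=
      (Set.not_subsingleton_iff.mp hsub).nonempty
    obtain ⟨F0, hF0⟩ := hne
    have hr : 1 ≤ r := by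
      by_contra h
      push_neg at h
      interval_cases r
      refine hsub fun F1 h1 F2 h2 => ?_
      rw [card_eq_zero.mp h1.2.1, card_eq_zero.mp h2.2.1]
    have hF0ne : F0.Nonempty := by rw [← card_pos, hF0.2.1]; omega
    obtain ⟨z, hzF0, a, haA, hadj⟩ :=
      exists_crossing hF0.2.2.2 hF0ne hA hF0.2.2.1
    have hzUA : z ∈ U \ A := supp_subset_ground hF0 hzF0
    have hzU : z ∈ U := (mem_sdiff.mp hzUA).1
    have hzA : z ∉ A := (mem_sdiff.mp hzUA).2
    have hswap : SwapAt (Supp G U A r) z := swap_supp hr hzU hzA haA hadj hconnA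
    have hcard' : ((U \ A).erase z).card ≤ n := by
      rw [card_erase_of_mem hzUA]
      omega
    have hdelVD : VD (Gam ((fun F => F.erase z) '' {F ∈ Supp G U A r | z ∈ F})
        ((U \ A).erase z)) := by
      rw [supp_del G U A r z hzU hzA hr, ground_erase_del]
      have := ih U (insert z A) (r - 1) (by rwa [← ground_erase_del])
        (insert_nonempty _ _) (connOn_insert hconnA haA hadj)
      rwa [sigmaC_eq_gam] at this
    by_cases hz : ∃ F1 ∈ Supp G U A r, z ∉ F1
    · obtain ⟨F1, hF1, hzF1⟩ := hz
      refine VD.step _ z ?_ (gam_shedding (unif_supp G U A r) hswap) ?_ ?_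
      · exact ⟨F1, hF1, singleton_subset_iff.mpr (mem_sdiff.mpr ⟨hzUA, hzF1⟩)⟩
      · rw [gam_link hzUA, supp_restrict, ground_erase_link]
        have := ih (U.erase z) A r (by rwa [← ground_erase_link]) hA hconnA
        rwa [sigmaC_eq_gam] at this
      · rw [gam_del hswap]
        exact hdelVD
    · push_neg at hz
      have hall : {F ∈ Supp G U A r | z ∈ F} = Supp G U A r := by
        ext F; exact ⟨fun h => h.1, fun h => ⟨h, hz F h⟩⟩
      rw [gam_all_mem hz]
      rw [← hall]
      exact hdelVD

end VDAux
namespace VDAux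

variable {V : Type*} [Fintype V] [DecidableEq V]

open Finset

lemma mem_firstVerts {k : ℕ} (x : Fin k → V) (j : ℕ) (v : V) :
    v ∈ firstVerts x j ↔ ∃ t : Fin k, (t : ℕ) < j ∧ x t = v := by
  simp [firstVerts]

lemma firstVerts_zero {k : ℕ} (x : Fin k → V) : firstVerts x 0 = ∅ := by
  ext v; simp [mem_firstVerts]

lemma firstVerts_succ {k : ℕ} (x : Fin (k + 1) → V) (j : ℕ) :
    firstVerts x (j + 1) = insert (x 0) (firstVerts (fun i : Fin k => x i.succ) j) := by
  ext v
  rw [mem_insert, mem_firstVerts, mem_firstVerts]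
  constructor
  · rintro ⟨t, ht, rfl⟩
    induction t using Fin.cases with
    | zero => exact Or.inl rfl
    | succ i =>
      refine Or.inr ⟨i, ?_, rfl⟩
      rw [Fin.val_succ] at ht
      omega
  · rintro (rfl | ⟨i, hi, rfl⟩)
    · exact ⟨0, by simp, rfl⟩
    · exact ⟨i.succ, by rw [Fin.val_succ]; omega, rfl⟩

lemma sdiff_insert_eq (U S : Finset V) (z : V) :
    U \ insert z S = (U.erase z) \ S :=
  (ground_erase_del U S z).symm.trans (ground_erase_link U S z)

/-- The sequence condition (right-hand side of the theorem, with ground set `U`). -/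
def Pseq (G : SimpleGraph V) [DecidableRel G.Adj] (U : Finset V) (r : ℕ) : Prop :=
  Set.Subsingleton (ConR G U r) ∨
    ∃ k : ℕ, 0 < k ∧ ∃ x : Fin k → V, (∀ i, x i ∈ U) ∧ Function.Injective x ∧
      (∀ i : Fin k,
        ConR G ((U \ firstVerts x (i : ℕ)) \ closedNbhd G (x i)) r = ∅) ∧
      Set.Subsingleton (ConR G (U \ firstVerts x k) r) ∧
      (∀ j : ℕ, j < k → ¬ Set.Subsingleton (ConR G (U \ firstVerts x j) r))

lemma conR_empty_of_small {G : SimpleGraph V} {U : Finset V} {r : ℕ} (hr : 2 ≤ r)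
    (hU : U.card ≤ 1) : ConR G U r = ∅ := by
  ext W
  simp only [Set.mem_empty_iff_false, iff_false]
  rintro ⟨hWU, hWc, -⟩
  have := card_le_card hWU
  omega

/-- Backward direction. -/
lemma vd_of_pseq (G : SimpleGraph V) [DecidableRel G.Adj] {r : ℕ} (hr : 2 ≤ r) :
    ∀ (N : ℕ) (U : Finset V), U.card ≤ N → Pseq G U r → VD (SigmaG G U r) := by
  intro N
  induction N with
  | zero =>
    intro U hU _
    rw [sigmaG_eq_gam]
    refine vd_gam_subsingleton ?_
    rw [conR_empty_of_small hr (by omega)]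
    exact Set.subsingleton_empty
  | succ n ih =>
    intro U hU hP
    rcases hP with hsub | ⟨k, hk, x, hmem, hinj, hA, hB, hC⟩
    · rw [sigmaG_eq_gam]; exact vd_gam_subsingleton hsub
    obtain ⟨k', rfl⟩ : ∃ k', k = k' + 1 := ⟨k - 1, by omega⟩
    set z := x 0 with hz_def
    have hnotsub0 : ¬ Set.Subsingleton (ConR G U r) := by
      have := hC 0 hk
      rwa [firstVerts_zero, sdiff_empty] at this
    have ha0 : ConR G (U \ closedNbhd G z) r = ∅ := by
      have := hA 0
      rwa [Fin.val_zero, firstVerts_zero, sdiff_empty] at this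
    have hzU : z ∈ U := hmem 0
    have hswap : SwapAt (ConR G U r) z := swap_conR hr hzU ha0
    have hUcard : (U.erase z).card ≤ n := by
      rw [card_erase_of_mem hzU]
      have : 0 < U.card := card_pos.mpr ⟨z, hzU⟩
      omega
    -- Pseq for the smaller ground set
    have hPnext : Pseq G (U.erase z) r := by
      set x' : Fin k' → V := fun i => x i.succ with hx'_def
      have hfv : ∀ j : ℕ, U \ firstVerts x (j + 1) = (U.erase z) \ firstVerts x' j := by
        intro j
        rw [firstVerts_succ, ← hz_def, sdiff_insert_eq]
      rcases Nat.eq_zero_or_pos k' with rfl | hk'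
      · left
        have := hB
        rwa [hfv 0, firstVerts_zero, sdiff_empty] at this
      · right
        refine ⟨k', hk', x', ?_, ?_, ?_, ?_, ?_⟩
        · intro i
          refine mem_erase.mpr ⟨fun h => ?_, hmem i.succ⟩
          have := hinj h
          exact absurd (congrArg Fin.val this) (by simp [Fin.val_succ])
        · intro a b h
          have := hinj (show x a.succ = x b.succ from h)
          exact Fin.succ_injective _ this
        · intro i
          have := hA i.succ
          rwa [Fin.val_succ, hfv (i : ℕ)] at this
        · have := hB
          rwa [hfv k'] at this
        · intro j hj
          have := hC (j + 1) (by omega)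
          rwa [hfv j] at this
    have hlinkVD : VD (SigmaG G (U.erase z) r) := ih (U.erase z) hUcard hPnext
    have hdelVD : VD (Gam ((fun F => F.erase z) '' {W ∈ ConR G U r | z ∈ W}) (U.erase z)) := by
      rw [conR_del G U r z hzU (by omega)]
      have hcd : (U \ ({z} : Finset V)).card ≤ n := by
        rwa [sdiff_singleton_eq_erase]
      have := vd_sigmaC G n U {z} (r - 1) hcd (singleton_nonempty z) (connOn_singleton G z)
      rw [sigmaC_eq_gam, sdiff_singleton_eq_erase] at this
      exact this
    rw [sigmaG_eq_gam]
    by_cases hex : ∃ W ∈ ConR G U r, z ∉ W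
    · obtain ⟨W, hW, hzW⟩ := hex
      refine VD.step _ z ?_ (gam_shedding (unif_conR G U r) hswap) ?_ ?_
      · exact ⟨W, hW, singleton_subset_iff.mpr (mem_sdiff.mpr ⟨hzU, hzW⟩)⟩
      · rw [gam_link hzU, conR_restrict]
        rwa [sigmaG_eq_gam] at hlinkVD
      · rw [gam_del hswap]
        exact hdelVD
    · push_neg at hex
      rw [gam_all_mem hex]
      have hall : {W ∈ ConR G U r | z ∈ W} = ConR G U r := by
        ext W; exact ⟨fun h => h.1, fun h => ⟨h, hex W h⟩⟩
      rw [← hall]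
      exact hdelVD

/-- Inversion for the `VD` inductive. -/
lemma vd_inversion {Δ : Set (Finset V)} (h : VD Δ) :
    (∃ s, Δ = {t | t ⊆ s}) ∨ Δ = ∅ ∨
      ∃ x, {x} ∈ Δ ∧ IsShedding Δ x ∧ VD (linkC Δ x) ∧ VD (delC Δ x) := by
  cases h with
  | simplex s => exact Or.inl ⟨s, rfl⟩
  | void => exact Or.inr (Or.inl rfl)
  | step Δ x hx hshed hlink hdel => exact Or.inr (Or.inr ⟨x, hx, hshed, hlink, hdel⟩)

/-- Forward direction. -/
lemma pseq_of_vd (G : SimpleGraph V) [DecidableRel G.Adj] {r : ℕ} (hr : 2 ≤ r) :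
    ∀ (N : ℕ) (U : Finset V), U.card ≤ N → VD (SigmaG G U r) → Pseq G U r := by
  intro N
  induction N with
  | zero =>
    intro U hU _
    left
    rw [conR_empty_of_small hr (by omega)]
    exact Set.subsingleton_empty
  | succ n ih =>
    intro U hU hvd
    by_cases hsub : Set.Subsingleton (ConR G U r)
    · exact Or.inl hsub
    rcases vd_inversion hvd with ⟨s, hs⟩ | hempty | ⟨x, hx, hshed, hlink, hdel⟩
    · -- simplex: ConR is a subsingleton
      exfalso
      apply hsub
      intro W1 h1 W2 h2
      have hW1 : U \ W1 ∈ SigmaG G U r := ⟨W1, h1, Subset.rfl⟩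
      have hW2 : U \ W2 ∈ SigmaG G U r := ⟨W2, h2, Subset.rfl⟩
      have hsmem : s ∈ SigmaG G U r := by rw [hs]; exact Set.mem_setOf.mpr Subset.rfl
      obtain ⟨W0, hW0, hsW0⟩ := hsmem
      rw [hs] at hW1 hW2
      have key : ∀ {W'}, W' ∈ ConR G U r → U \ W' ∈ {t : Finset V | t ⊆ s} → W' = W0 := by
        intro W' hmem hsubs
        have h0 : W0 ⊆ W' :=
          sdiff_subset_of_sdiff_subset hW0.1 ((Set.mem_setOf.mp hsubs).trans hsW0)
        refine (eq_of_subset_of_card_le h0 ?_).symm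
        rw [hmem.2.1, hW0.2.1]
      rw [key h1 hW1, key h2 hW2]
    · -- void: ConR is empty
      exfalso
      apply hsub
      intro W1 h1 W2 h2
      have : U \ W1 ∈ SigmaG G U r := ⟨W1, h1, Subset.rfl⟩
      rw [hempty] at this
      exact absurd this (Set.notMem_empty _)
    · -- step
      obtain ⟨W, hW, hxW⟩ := hx
      have hxU : x ∈ U := (mem_sdiff.mp (hxW (mem_singleton_self x))).1
      have hswap : SwapAt (ConR G U r) x := by
        rw [sigmaG_eq_gam] at hshed
        exact gam_swap_of_shedding (unif_conR G U r) hxU hshed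
      -- condition (a) at x
      have ha0 : ConR G (U \ closedNbhd G x) r = ∅ := by
        ext W'
        simp only [Set.mem_empty_iff_false, iff_false]
        rintro ⟨hW'U, hW'c, hW'conn⟩
        have hW'U2 : W' ⊆ U := hW'U.trans (sdiff_subset)
        have hxW' : x ∉ W' := fun h => by
          have := mem_sdiff.mp (hW'U h)
          exact this.2 (mem_insert_self x _)
        obtain ⟨f, hf, hsw⟩ := hswap W' ⟨hW'U2, hW'c, hW'conn⟩ hxW'
        obtain ⟨-, hswc, hswconn⟩ := hsw
        -- find a neighbor of x inside the swap
        have hxmem : x ∈ insert x (W'.erase f) := mem_insert_self _ _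
        have : ∃ y ∈ insert x (W'.erase f), y ≠ x := by
          have h2 : 1 < (insert x (W'.erase f)).card := by rw [hswc]; omega
          obtain ⟨a, ha, b, hb, hab⟩ := one_lt_card.mp h2
          rcases eq_or_ne a x with rfl | hax
          · exact ⟨b, hb, fun h => hab h.symm⟩
          · exact ⟨a, ha, hax⟩
        obtain ⟨y, hy, hyx⟩ := this
        obtain ⟨c, hc, hadj⟩ := exists_neighbor hswconn hxmem hy (fun h => hyx h.symm)
        have hcx : c ≠ x := fun h => G.irrefl (h ▸ hadj)
        have hcW' : c ∈ W' := by
          rcases mem_insert.mp hc with rfl | h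
          · exact absurd rfl hcx
          · exact mem_of_mem_erase h
        have := (mem_sdiff.mp (hW'U hcW')).2
        exact this (mem_insert_of_mem (by rwa [SimpleGraph.mem_neighborFinset]))
      -- link gives Pseq on the smaller set
      have hlink' : VD (SigmaG G (U.erase x) r) := by
        rw [sigmaG_eq_gam] at hlink
        rw [gam_link hxU, conR_restrict] at hlink
        rwa [sigmaG_eq_gam]
      have hUcard : (U.erase x).card ≤ n := by
        rw [card_erase_of_mem hxU]
        have : 0 < U.card := card_pos.mpr ⟨x, hxU⟩
        omega
      have hPnext := ih (U.erase x) hUcard hlink'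
      right
      rcases hPnext with hsub' | ⟨k, hk, x', hmem', hinj', hA', hB', hC'⟩
      · -- k = 1
        refine ⟨1, one_pos, fun _ => x, fun _ => hxU, fun a b _ => Subsingleton.elim a b,
          ?_, ?_, ?_⟩
        · intro i
          have : (i : ℕ) = 0 := by omega
          rw [this, firstVerts_zero, sdiff_empty]
          exact ha0
        · have : firstVerts (fun _ : Fin 1 => x) 1 = {x} := by
            ext v
            rw [mem_firstVerts, mem_singleton]
            constructor
            · rintro ⟨t, -, rfl⟩; rfl
            · rintro rfl; exact ⟨0, by omega, rfl⟩
          rw [this, sdiff_singleton_eq_erase]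
          exact hsub'
        · intro j hj
          have : j = 0 := by omega
          rw [this, firstVerts_zero, sdiff_empty]
          exact hsub
      · -- prepend x
        set xs : Fin (k + 1) → V := Fin.cases x x' with hxs_def
        have hxs0 : xs 0 = x := rfl
        have hxss : ∀ i : Fin k, xs i.succ = x' i := fun i => by
          simp [hxs_def]
        have hxtail : (fun i : Fin k => xs i.succ) = x' := funext hxss
        have hfv : ∀ j : ℕ, U \ firstVerts xs (j + 1) = (U.erase x) \ firstVerts x' j := by
          intro j
          rw [firstVerts_succ, hxs0, hxtail, sdiff_insert_eq]
        have hx'ne : ∀ i, x' i ≠ x := fun i h =>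
          (mem_erase.mp (hmem' i)).1 h
        refine ⟨k + 1, Nat.succ_pos k, xs, ?_, ?_, ?_, ?_, ?_⟩
        · intro i
          induction i using Fin.cases with
          | zero => exact hxU
          | succ j => rw [hxss]; exact mem_of_mem_erase (hmem' j)
        · intro a b h
          induction a using Fin.cases with
          | zero =>
            induction b using Fin.cases with
            | zero => rfl
            | succ j => rw [hxs0, hxss] at h; exact absurd h.symm (hx'ne j)
          | succ i =>
            induction b using Fin.cases with
            | zero => rw [hxs0, hxss] at h; exact absurd h (hx'ne i)
            | succ j =>
              rw [hxss, hxss] at h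
              rw [hinj' h]
        · intro i
          induction i using Fin.cases with
          | zero =>
            rw [hxs0, Fin.val_zero, firstVerts_zero, sdiff_empty]
            exact ha0
          | succ j =>
            rw [hxss, Fin.val_succ, hfv (j : ℕ)]
            exact hA' j
        · rw [hfv k]
          exact hB'
        · intro j hj
          rcases Nat.eq_zero_or_pos j with rfl | hjpos
          · rw [firstVerts_zero, sdiff_empty]
            exact hsub
          · obtain ⟨j', rfl⟩ : ∃ j', j = j' + 1 := ⟨j - 1, by omega⟩
            rw [hfv j']
            exact hC' j' (by omega)

end VDAux
/-- For `r ≥ 2`, `Σ_r(G)` is vertex decomposable iff either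
`|E(Con_r(G))| ≤ 1` or there is a sequence of distinct vertices `x_1, …, x_k` such that
(a) `E(Con_r(G_i \ N_{G_i}[x_{i+1}])) = ∅` for `0 ≤ i ≤ k-1` (where
`G_i = G \ {x_1,…,x_i}`, and the closed neighborhood of `x_{i+1}` in `G_i` is
`N_G[x_{i+1}] ∩ V(G_i)`), and (b) `k` is least positive with
`|E(Con_r(G \ {x_1,…,x_k}))| ≤ 1`. -/
theorem sigma_vd_iff_shedding_sequence {V : Type*} [Fintype V] [DecidableEq V]
    (G : SimpleGraph V) [DecidableRel G.Adj] (r : ℕ) (hr : 2 ≤ r) :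
    VD (SigmaG G Finset.univ r) ↔
      (Set.Subsingleton (ConR G Finset.univ r) ∨
        ∃ k : ℕ, 0 < k ∧ ∃ x : Fin k → V, Function.Injective x ∧
          (∀ i : Fin k,
            ConR G ((Finset.univ \ firstVerts x i) \ closedNbhd G (x i)) r = ∅) ∧
          Set.Subsingleton (ConR G (Finset.univ \ firstVerts x k) r) ∧
          (∀ j : ℕ, j < k →
            ¬ Set.Subsingleton (ConR G (Finset.univ \ firstVerts x j) r))) := by
  constructor
  · intro h
    rcases VDAux.pseq_of_vd G hr Finset.univ.card Finset.univ le_rfl h with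
      hsub | ⟨k, hk, x, -, hinj, hA, hB, hC⟩
    · exact Or.inl hsub
    · exact Or.inr ⟨k, hk, x, hinj, hA, hB, hC⟩
  · intro h
    apply VDAux.vd_of_pseq G hr Finset.univ.card Finset.univ le_rfl
    rcases h with hsub | ⟨k, hk, x, hinj, hA, hB, hC⟩
    · exact Or.inl hsub
    · exact Or.inr ⟨k, hk, x, fun i => Finset.mem_univ _, hinj, hA, hB, hC⟩
end

section
/- Let G_1 and G_2 be finite simple graphs on disjoint vertex sets and r ≥ 1 an integer. Then Σ_r(G_1 ⊔ G_2) = (Σ_r(G_1) * Δ_{V(G_2)}) ∪ (Δ_{V(G_1)} * Σ_r(G_2)), where G_1 ⊔ G_2 is the disjoint union graph, Δ_W denotes the full simplex on vertex set W, the join Δ * Δ' of two complexes on disjoint vertex sets has faces {H ∪ H' : H ∈ Δ, H' ∈ Δ'}, and ∪ is the union of simplicial complexes. -/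
open Finset

variable {V : Type*} [Fintype V] [DecidableEq V]

/-- The full simplex on the vertex set `W`. -/
def simplexOn {V : Type*} (W : Finset V) : Set (Finset V) := {H | H ⊆ W}

/-- The join of two simplicial complexes (on disjoint vertex sets). -/
def joinC {V : Type*} [DecidableEq V] (Δ₁ Δ₂ : Set (Finset V)) : Set (Finset V) :=
  {H | ∃ H₁ ∈ Δ₁, ∃ H₂ ∈ Δ₂, H = H₁ ∪ H₂}


set_option linter.unusedSectionVars false in
lemma induce_sup_left (G₁ G₂ : SimpleGraph V) (U₁ U₂ : Finset V) (hU : Disjoint U₁ U₂)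
    (h₂ : ∀ a b : V, G₂.Adj a b → a ∈ U₂ ∧ b ∈ U₂) (s : Finset V) (hs : s ⊆ U₁) :
    (G₁ ⊔ G₂).induce (s : Set V) = G₁.induce (s : Set V) := by
  ext a b
  simp only [SimpleGraph.comap_adj, SimpleGraph.sup_adj, Function.Embedding.coe_subtype]
  constructor
  · rintro (h | h)
    · exact h
    · exact ((Finset.disjoint_left.mp hU (hs (by exact_mod_cast a.2)) (h₂ _ _ h).1)).elim
  · exact Or.inl

set_option linter.unusedSectionVars false in
lemma reach_mem_left (G₁ G₂ : SimpleGraph V) (U₁ U₂ : Finset V) (hU : Disjoint U₁ U₂)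
    (h₁ : ∀ a b : V, G₁.Adj a b → a ∈ U₁ ∧ b ∈ U₁)
    (h₂ : ∀ a b : V, G₂.Adj a b → a ∈ U₂ ∧ b ∈ U₂)
    (s : Set V) (x y : s) (h : ((G₁ ⊔ G₂).induce s).Reachable x y)
    (hx : x.1 ∈ U₁) : y.1 ∈ U₁ := by
  obtain ⟨w⟩ := h
  induction w with
  | nil => exact hx
  | cons ha _ ih =>
    apply ih
    rcases ha with h | h
    · exact (h₁ _ _ h).2
    · exact ((Finset.disjoint_left.mp hU hx (h₂ _ _ h).1)).elim

/-- For graphs `G₁, G₂` on disjoint vertex sets `U₁, U₂`,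
`Σ_r(G₁ ⊔ G₂) = (Σ_r(G₁) * Δ_{U₂}) ∪ (Δ_{U₁} * Σ_r(G₂))`. Here the disjoint union
graph is modelled as `G₁ ⊔ G₂` on a common ambient vertex type, where all edges of
`Gᵢ` lie inside `Uᵢ`. -/
theorem sigma_disjUnion {V : Type*} [Fintype V] [DecidableEq V]
    (G₁ G₂ : SimpleGraph V) (U₁ U₂ : Finset V) (hU : Disjoint U₁ U₂)
    (h₁ : ∀ a b : V, G₁.Adj a b → a ∈ U₁ ∧ b ∈ U₁)
    (h₂ : ∀ a b : V, G₂.Adj a b → a ∈ U₂ ∧ b ∈ U₂)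
    (r : ℕ) (hr : 1 ≤ r) :
    SigmaG (G₁ ⊔ G₂) (U₁ ∪ U₂) r =
      joinC (SigmaG G₁ U₁ r) (simplexOn U₂) ∪ joinC (simplexOn U₁) (SigmaG G₂ U₂ r) := by
  have hcomm : G₁ ⊔ G₂ = G₂ ⊔ G₁ := sup_comm _ _
  ext H
  constructor
  · rintro ⟨W, ⟨hWU, hWc, hWconn⟩, hH⟩
    -- W is nonempty
    obtain ⟨⟨a, ha⟩⟩ := hWconn.nonempty
    have haW : a ∈ W := by exact_mod_cast ha
    rcases Finset.mem_union.mp (hWU haW) with haU | haU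
    · -- W ⊆ U₁
      have hWsub : W ⊆ U₁ := by
        intro b hb
        exact reach_mem_left G₁ G₂ U₁ U₂ hU h₁ h₂ (W : Set V) ⟨a, ha⟩
          ⟨b, by exact_mod_cast hb⟩ (hWconn.preconnected _ _) haU
      left
      refine ⟨H ∩ U₁, ⟨W, ⟨hWsub, hWc, ?_⟩, ?_⟩, H ∩ U₂, fun x hx => (Finset.mem_inter.mp hx).2, ?_⟩
      · unfold ConnOn
        rwa [← induce_sup_left G₁ G₂ U₁ U₂ hU h₂ W hWsub]
      · intro x hx
        obtain ⟨hxH, hxU⟩ := Finset.mem_inter.mp hx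
        have := hH hxH
        rw [Finset.mem_sdiff] at this
        exact Finset.mem_sdiff.mpr ⟨hxU, this.2⟩
      · ext x
        simp only [Finset.mem_union, Finset.mem_inter]
        constructor
        · intro hx
          have := hH hx
          rw [Finset.mem_sdiff, Finset.mem_union] at this
          rcases this.1 with h | h
          · exact Or.inl ⟨hx, h⟩
          · exact Or.inr ⟨hx, h⟩
        · rintro (⟨h, _⟩ | ⟨h, _⟩) <;> exact h
    · -- W ⊆ U₂
      have hWsub : W ⊆ U₂ := by
        intro b hb
        refine reach_mem_left G₂ G₁ U₂ U₁ hU.symm h₂ h₁ (W : Set V) ⟨a, ha⟩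
          ⟨b, by exact_mod_cast hb⟩ ?_ haU
        rw [← hcomm]
        exact hWconn.preconnected _ _
      right
      refine ⟨H ∩ U₁, fun x hx => (Finset.mem_inter.mp hx).2, H ∩ U₂,
        ⟨W, ⟨hWsub, hWc, ?_⟩, ?_⟩, ?_⟩
      · unfold ConnOn
        rw [← induce_sup_left G₂ G₁ U₂ U₁ hU.symm h₁ W hWsub, ← hcomm]
        exact hWconn
      · intro x hx
        obtain ⟨hxH, hxU⟩ := Finset.mem_inter.mp hx
        have := hH hxH
        rw [Finset.mem_sdiff] at this
        exact Finset.mem_sdiff.mpr ⟨hxU, this.2⟩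
      · ext x
        simp only [Finset.mem_union, Finset.mem_inter]
        constructor
        · intro hx
          have := hH hx
          rw [Finset.mem_sdiff, Finset.mem_union] at this
          rcases this.1 with h | h
          · exact Or.inl ⟨hx, h⟩
          · exact Or.inr ⟨hx, h⟩
        · rintro (⟨h, _⟩ | ⟨h, _⟩) <;> exact h
  · rintro (⟨H₁, ⟨W, ⟨hWU, hWc, hWconn⟩, hH₁⟩, H₂, hH₂, rfl⟩ |
            ⟨H₁, hH₁, H₂, ⟨W, ⟨hWU, hWc, hWconn⟩, hH₂⟩, rfl⟩)
    · refine ⟨W, ⟨hWU.trans Finset.subset_union_left, hWc, ?_⟩, ?_⟩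
      · unfold ConnOn
        rwa [induce_sup_left G₁ G₂ U₁ U₂ hU h₂ W hWU]
      · intro x hx
        rw [Finset.mem_sdiff, Finset.mem_union]
        rcases Finset.mem_union.mp hx with h | h
        · have := hH₁ h
          rw [Finset.mem_sdiff] at this
          exact ⟨Or.inl this.1, this.2⟩
        · exact ⟨Or.inr (hH₂ h), fun hxW => Finset.disjoint_left.mp hU (hWU hxW) (hH₂ h)⟩
    · refine ⟨W, ⟨hWU.trans Finset.subset_union_right, hWc, ?_⟩, ?_⟩
      · unfold ConnOn
        rw [hcomm, induce_sup_left G₂ G₁ U₂ U₁ hU.symm h₁ W hWU]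
        exact hWconn
      · intro x hx
        rw [Finset.mem_sdiff, Finset.mem_union]
        rcases Finset.mem_union.mp hx with h | h
        · exact ⟨Or.inl (hH₁ h), fun hxW => Finset.disjoint_left.mp hU (hH₁ h) (hWU hxW)⟩
        · have := hH₂ h
          rw [Finset.mem_sdiff] at this
          exact ⟨Or.inr this.1, this.2⟩
end

section
/- Let G_1 and G_2 be finite simple graphs on disjoint vertex sets and r ≥ 1 an integer. Then Σ_r(G_1 * G_2) = (Σ_r(G_1) * Δ_{V(G_2)}) ∪ (Δ_{V(G_1)} * Σ_r(G_2)) ∪ ⟨(V(G_1) ∪ V(G_2)) \ E : E ⊆ V(G_1) ∪ V(G_2), |E| = r, E ∩ V(G_1) ≠ ∅, E ∩ V(G_2) ≠ ∅⟩, where G_1 * G_2 is the join graph, Δ_W denotes the full simplex on W, ⟨…⟩ denotes the simplicial complex generated by the listed sets, and the join Δ * Δ' of two complexes on disjoint vertex sets has faces {H ∪ H' : H ∈ Δ, H' ∈ Δ'}. -/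
open Finset

variable {V : Type*} [Fintype V] [DecidableEq V]

/-- The join `G₁ * G₂` of two graphs on disjoint vertex sets `U₁, U₂`: keep all edges of
`G₁` and `G₂` and add all edges between `U₁` and `U₂`. -/
def joinGraph {V : Type*} (G₁ G₂ : SimpleGraph V) (U₁ U₂ : Finset V) : SimpleGraph V :=
  SimpleGraph.fromRel (fun a b => G₁.Adj a b ∨ G₂.Adj a b ∨ (a ∈ U₁ ∧ b ∈ U₂))

omit [Fintype V] [DecidableEq V] in
lemma induce_join_left (G₁ G₂ : SimpleGraph V) (U₁ U₂ : Finset V) (hU : Disjoint U₁ U₂)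
    (h₂ : ∀ a b : V, G₂.Adj a b → a ∈ U₂ ∧ b ∈ U₂)
    (s : Set V) (hs : s ⊆ ↑U₁) :
    (joinGraph G₁ G₂ U₁ U₂).induce s = G₁.induce s := by
  ext a b
  have ha : (a : V) ∈ U₁ := by exact_mod_cast hs a.2
  have hb : (b : V) ∈ U₁ := by exact_mod_cast hs b.2
  have ha2 : (a : V) ∉ U₂ := Finset.disjoint_left.mp hU ha
  have hb2 : (b : V) ∉ U₂ := Finset.disjoint_left.mp hU hb
  show (joinGraph G₁ G₂ U₁ U₂).Adj a b ↔ G₁.Adj a b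
  simp only [joinGraph, SimpleGraph.fromRel_adj]
  constructor
  · rintro ⟨hne, (h | h | ⟨_, h⟩) | (h | h | ⟨_, h⟩)⟩
    · exact h
    · exact absurd (h₂ _ _ h).1 ha2
    · exact absurd h hb2
    · exact h.symm
    · exact absurd (h₂ _ _ h).1 hb2
    · exact absurd h ha2
  · intro h
    exact ⟨h.ne, Or.inl (Or.inl h)⟩

omit [Fintype V] [DecidableEq V] in
lemma induce_join_right (G₁ G₂ : SimpleGraph V) (U₁ U₂ : Finset V) (hU : Disjoint U₁ U₂)
    (h₁ : ∀ a b : V, G₁.Adj a b → a ∈ U₁ ∧ b ∈ U₁)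
    (s : Set V) (hs : s ⊆ ↑U₂) :
    (joinGraph G₁ G₂ U₁ U₂).induce s = G₂.induce s := by
  ext a b
  have ha : (a : V) ∈ U₂ := by exact_mod_cast hs a.2
  have hb : (b : V) ∈ U₂ := by exact_mod_cast hs b.2
  have ha2 : (a : V) ∉ U₁ := Finset.disjoint_right.mp hU ha
  have hb2 : (b : V) ∉ U₁ := Finset.disjoint_right.mp hU hb
  show (joinGraph G₁ G₂ U₁ U₂).Adj a b ↔ G₂.Adj a b
  simp only [joinGraph, SimpleGraph.fromRel_adj]
  constructor
  · rintro ⟨hne, (h | h | ⟨h, _⟩) | (h | h | ⟨h, _⟩)⟩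
    · exact absurd (h₁ _ _ h).1 ha2
    · exact h
    · exact absurd h ha2
    · exact absurd (h₁ _ _ h).1 hb2
    · exact h.symm
    · exact absurd h hb2
  · intro h
    exact ⟨h.ne, Or.inl (Or.inr (Or.inl h))⟩

omit [Fintype V] in
lemma join_conn_mixed (G₁ G₂ : SimpleGraph V) (U₁ U₂ : Finset V) (hU : Disjoint U₁ U₂)
    (s : Finset V) (hs : s ⊆ U₁ ∪ U₂) (h1 : (s ∩ U₁).Nonempty) (h2 : (s ∩ U₂).Nonempty) :
    ((joinGraph G₁ G₂ U₁ U₂).induce (s : Set V)).Connected := by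
  obtain ⟨a, ha⟩ := h1
  obtain ⟨b, hb⟩ := h2
  rw [Finset.mem_inter] at ha hb
  have key : ∀ x ∈ U₁, ∀ y ∈ U₂, (joinGraph G₁ G₂ U₁ U₂).Adj x y := by
    intro x hx y hy
    have hne : x ≠ y := fun h => Finset.disjoint_left.mp hU hx (h ▸ hy)
    exact ⟨hne, Or.inl (Or.inr (Or.inr ⟨hx, hy⟩))⟩
  set G := joinGraph G₁ G₂ U₁ U₂
  have aS : a ∈ (s : Set V) := by exact_mod_cast ha.1
  have bS : b ∈ (s : Set V) := by exact_mod_cast hb.1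
  have hne : Nonempty (s : Set V) := ⟨⟨a, aS⟩⟩
  have reach : ∀ z : (s : Set V), (G.induce (s : Set V)).Reachable z ⟨a, aS⟩ := by
    intro z
    have hz := hs (by exact_mod_cast z.2)
    rcases Finset.mem_union.mp hz with hz1 | hz2
    · by_cases hza : (z : V) = a
      · rw [show z = (⟨a, aS⟩ : (s : Set V)) from Subtype.ext hza]
      · have e1 : (G.induce (s : Set V)).Adj z ⟨b, bS⟩ := key _ hz1 _ hb.2
        have e2 : (G.induce (s : Set V)).Adj ⟨b, bS⟩ ⟨a, aS⟩ := (key _ ha.2 _ hb.2).symm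
        exact e1.reachable.trans e2.reachable
    · have e : (G.induce (s : Set V)).Adj z ⟨a, aS⟩ := (key _ ha.2 _ hz2).symm
      exact e.reachable
  exact ⟨fun x y => (reach x).trans (reach y).symm⟩

/-- For graphs `G₁, G₂` on disjoint vertex sets `U₁, U₂`,
`Σ_r(G₁ * G₂)` equals the union of `Σ_r(G₁) * Δ_{U₂}`, `Δ_{U₁} * Σ_r(G₂)` and the complex
generated by the complements of the `r`-sets meeting both `U₁` and `U₂`. -/
theorem sigma_joinGraph {V : Type*} [Fintype V] [DecidableEq V]
    (G₁ G₂ : SimpleGraph V) (U₁ U₂ : Finset V) (hU : Disjoint U₁ U₂)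
    (h₁ : ∀ a b : V, G₁.Adj a b → a ∈ U₁ ∧ b ∈ U₁)
    (h₂ : ∀ a b : V, G₂.Adj a b → a ∈ U₂ ∧ b ∈ U₂)
    (r : ℕ) (hr : 1 ≤ r) :
    SigmaG (joinGraph G₁ G₂ U₁ U₂) (U₁ ∪ U₂) r =
      (joinC (SigmaG G₁ U₁ r) (simplexOn U₂) ∪ joinC (simplexOn U₁) (SigmaG G₂ U₂ r)) ∪
        {H | ∃ E : Finset V, E ⊆ U₁ ∪ U₂ ∧ E.card = r ∧
          (E ∩ U₁).Nonempty ∧ (E ∩ U₂).Nonempty ∧ H ⊆ (U₁ ∪ U₂) \ E} := by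
  ext H
  constructor
  · rintro ⟨W, ⟨hWU, hWr, hWc⟩, hHW⟩
    rcases (W ∩ U₁).eq_empty_or_nonempty with e1 | n1
    · -- W ⊆ U₂
      have hW2 : W ⊆ U₂ := by
        intro x hx
        rcases Finset.mem_union.mp (hWU hx) with h | h
        · exact absurd (Finset.mem_inter.mpr ⟨hx, h⟩) (by rw [e1]; exact Finset.notMem_empty x)
        · exact h
      left; right
      refine ⟨H ∩ U₁, ?_, H ∩ U₂, ⟨W, ⟨hW2, hWr, ?_⟩, ?_⟩, ?_⟩
      · exact fun x hx => (Finset.mem_inter.mp hx).2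
      · unfold ConnOn at hWc ⊢
        rwa [← induce_join_right G₁ G₂ U₁ U₂ hU h₁ _ (by exact_mod_cast hW2)]
      · intro x hx
        rw [Finset.mem_inter] at hx
        rw [Finset.mem_sdiff]
        exact ⟨hx.2, fun hw => (Finset.mem_sdiff.mp (hHW hx.1)).2 hw⟩
      · ext x
        simp only [Finset.mem_union, Finset.mem_inter]
        constructor
        · intro hx
          rcases Finset.mem_union.mp (Finset.mem_sdiff.mp (hHW hx)).1 with h | h
          · exact Or.inl ⟨hx, h⟩
          · exact Or.inr ⟨hx, h⟩
        · rintro (⟨h, _⟩ | ⟨h, _⟩) <;> exact h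
    · rcases (W ∩ U₂).eq_empty_or_nonempty with e2 | n2
      · -- W ⊆ U₁
        have hW1 : W ⊆ U₁ := by
          intro x hx
          rcases Finset.mem_union.mp (hWU hx) with h | h
          · exact h
          · exact absurd (Finset.mem_inter.mpr ⟨hx, h⟩)
              (by rw [e2]; exact Finset.notMem_empty x)
        left; left
        refine ⟨H ∩ U₁, ⟨W, ⟨hW1, hWr, ?_⟩, ?_⟩, H ∩ U₂, ?_, ?_⟩
        · unfold ConnOn at hWc ⊢
          rwa [← induce_join_left G₁ G₂ U₁ U₂ hU h₂ _ (by exact_mod_cast hW1)]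
        · intro x hx
          rw [Finset.mem_inter] at hx
          rw [Finset.mem_sdiff]
          exact ⟨hx.2, fun hw => (Finset.mem_sdiff.mp (hHW hx.1)).2 hw⟩
        · exact fun x hx => (Finset.mem_inter.mp hx).2
        · ext x
          simp only [Finset.mem_union, Finset.mem_inter]
          constructor
          · intro hx
            rcases Finset.mem_union.mp (Finset.mem_sdiff.mp (hHW hx)).1 with h | h
            · exact Or.inl ⟨hx, h⟩
            · exact Or.inr ⟨hx, h⟩
          · rintro (⟨h, _⟩ | ⟨h, _⟩) <;> exact h
      · right
        exact ⟨W, hWU, hWr, n1, n2, hHW⟩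
  · rintro ((⟨H₁, ⟨W, ⟨hWU, hWr, hWc⟩, hH₁⟩, H₂, hH₂, rfl⟩ | ⟨H₁, hH₁, H₂, ⟨W, ⟨hWU, hWr, hWc⟩, hH₂⟩, rfl⟩) | ⟨E, hEU, hEr, n1, n2, hHE⟩)
    · refine ⟨W, ⟨hWU.trans Finset.subset_union_left, hWr, ?_⟩, ?_⟩
      · unfold ConnOn at hWc ⊢
        rwa [induce_join_left G₁ G₂ U₁ U₂ hU h₂ _ (by exact_mod_cast hWU)]
      · intro x hx
        rw [Finset.mem_sdiff]
        rcases Finset.mem_union.mp hx with h | h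
        · have := Finset.mem_sdiff.mp (hH₁ h)
          exact ⟨Finset.mem_union_left _ this.1, this.2⟩
        · have hx2 := hH₂ h
          exact ⟨Finset.mem_union_right _ hx2,
            fun hw => Finset.disjoint_left.mp hU (hWU hw) hx2⟩
    · refine ⟨W, ⟨hWU.trans Finset.subset_union_right, hWr, ?_⟩, ?_⟩
      · unfold ConnOn at hWc ⊢
        rwa [induce_join_right G₁ G₂ U₁ U₂ hU h₁ _ (by exact_mod_cast hWU)]
      · intro x hx
        rw [Finset.mem_sdiff]
        rcases Finset.mem_union.mp hx with h | h
        · have hx1 := hH₁ h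
          exact ⟨Finset.mem_union_left _ hx1,
            fun hw => Finset.disjoint_right.mp hU (hWU hw) hx1⟩
        · have := Finset.mem_sdiff.mp (hH₂ h)
          exact ⟨Finset.mem_union_right _ this.1, this.2⟩
    · exact ⟨E, ⟨hEU, hEr, join_conn_mixed G₁ G₂ U₁ U₂ hU E hEU n1 n2⟩, hHE⟩
end
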